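/- arXiv:0805.0149 — 5 statements merged into one kernel-verified Lean document; each statement's English description precedes it below -/
import Mathlib

section
/- Let F be a real n×p matrix, let k ≥ 1 and let k₁,…,k_l be positive integers with k + k₁ + ⋯ + k_l ≤ p. Then the restricted orthogonality constants of F satisfy θ_{k, k₁+⋯+k_l} ≤ √(θ_{k,k₁}² + ⋯ + θ_{k,k_l}²). -/
/-- A vector `v ∈ ℝ^p` is `k`-sparse if it has at most `k` nonzero entries. -/
def IsSparse {p : ℕ} (k : ℕ) (v : Fin p → ℝ) : Prop :=
  ∃ s : Finset (Fin p), s.card ≤ k ∧ ∀ i ∉ s, v i = 0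

/-- The ℓ₂ norm of a vector in `ℝ^m`. -/
noncomputable def l2norm {m : ℕ} (v : Fin m → ℝ) : ℝ :=
  Real.sqrt (∑ i, v i ^ 2)

/-- The ℓ₁ norm of a vector in `ℝ^m`. -/
def l1norm {m : ℕ} (v : Fin m → ℝ) : ℝ := ∑ i, |v i|

/-- The `k`-restricted isometry constant `δ_k` of `F`: the smallest `δ` such that
`√(1-δ)‖c‖₂ ≤ ‖Fc‖₂ ≤ √(1+δ)‖c‖₂` for every `k`-sparse vector `c`. -/
noncomputable def ripConst {n p : ℕ} (F : Matrix (Fin n) (Fin p) ℝ) (k : ℕ) : ℝ :=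
  sInf {δ : ℝ | ∀ c : Fin p → ℝ, IsSparse k c →
    Real.sqrt (1 - δ) * l2norm c ≤ l2norm (F.mulVec c) ∧
    l2norm (F.mulVec c) ≤ Real.sqrt (1 + δ) * l2norm c}

/-- The `(k,k')`-restricted orthogonality constant `θ_{k,k'}` of `F`: the smallest `θ` such
that `|⟨Fc, Fc'⟩| ≤ θ‖c‖₂‖c'‖₂` for all `k`-sparse `c` and `k'`-sparse `c'` with disjoint
supports. -/
noncomputable def roConst {n p : ℕ} (F : Matrix (Fin n) (Fin p) ℝ) (k k' : ℕ) : ℝ :=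
  sInf {θ : ℝ | ∀ c c' : Fin p → ℝ, IsSparse k c → IsSparse k' c' →
    (∀ i, c i = 0 ∨ c' i = 0) →
    |∑ i, F.mulVec c i * F.mulVec c' i| ≤ θ * (l2norm c * l2norm c')}

/-! ### Auxiliary lemmas -/

/-- The defining set of `roConst`. -/
def roSet {n p : ℕ} (F : Matrix (Fin n) (Fin p) ℝ) (k k' : ℕ) : Set ℝ :=
  {θ : ℝ | ∀ c c' : Fin p → ℝ, IsSparse k c → IsSparse k' c' →
    (∀ i, c i = 0 ∨ c' i = 0) →
    |∑ i, F.mulVec c i * F.mulVec c' i| ≤ θ * (l2norm c * l2norm c')}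

lemma roConst_eq_sInf {n p : ℕ} (F : Matrix (Fin n) (Fin p) ℝ) (k k' : ℕ) :
    roConst F k k' = sInf (roSet F k k') := rfl

lemma l2norm_nonneg {m : ℕ} (v : Fin m → ℝ) : 0 ≤ l2norm v := Real.sqrt_nonneg _

lemma l2norm_sq {m : ℕ} (v : Fin m → ℝ) : l2norm v ^ 2 = ∑ i, v i ^ 2 :=
  Real.sq_sqrt (Finset.sum_nonneg fun _ _ => sq_nonneg _)

lemma abs_inner_le_l2 {m : ℕ} (u v : Fin m → ℝ) :
    |∑ i, u i * v i| ≤ l2norm u * l2norm v := by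
  rw [← Real.sqrt_sq_eq_abs, l2norm, l2norm,
    ← Real.sqrt_mul (Finset.sum_nonneg fun _ _ => sq_nonneg _)]
  exact Real.sqrt_le_sqrt (Finset.sum_mul_sq_le_sq_mul_sq _ _ _)

lemma l2norm_mulVec_le {n p : ℕ} (F : Matrix (Fin n) (Fin p) ℝ) (c : Fin p → ℝ) :
    l2norm (F.mulVec c) ≤ Real.sqrt (∑ i, ∑ j, F i j ^ 2) * l2norm c := by
  rw [l2norm, l2norm, ← Real.sqrt_mul (by positivity)]
  apply Real.sqrt_le_sqrt
  rw [Finset.sum_mul]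
  apply Finset.sum_le_sum
  intro i _
  have : F.mulVec c i = ∑ j, F i j * c j := rfl
  rw [this]
  exact Finset.sum_mul_sq_le_sq_mul_sq _ _ _

lemma frob_mem_roSet {n p : ℕ} (F : Matrix (Fin n) (Fin p) ℝ) (k k' : ℕ) :
    (∑ i, ∑ j, F i j ^ 2) ∈ roSet F k k' := by
  intro c c' _ _ _
  have h1 := abs_inner_le_l2 (F.mulVec c) (F.mulVec c')
  have h2 := l2norm_mulVec_le F c
  have h3 := l2norm_mulVec_le F c'
  have hB : (0:ℝ) ≤ Real.sqrt (∑ i, ∑ j, F i j ^ 2) := Real.sqrt_nonneg _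
  have h4 : l2norm (F.mulVec c) * l2norm (F.mulVec c') ≤
      (Real.sqrt (∑ i, ∑ j, F i j ^ 2) * l2norm c) *
      (Real.sqrt (∑ i, ∑ j, F i j ^ 2) * l2norm c') :=
    mul_le_mul h2 h3 (l2norm_nonneg _) (mul_nonneg hB (l2norm_nonneg _))
  have h5 : Real.sqrt (∑ i, ∑ j, F i j ^ 2) * Real.sqrt (∑ i, ∑ j, F i j ^ 2)
      = ∑ i, ∑ j, F i j ^ 2 := Real.mul_self_sqrt (by positivity)
  calc |∑ i, F.mulVec c i * F.mulVec c' i| ≤ _ := h1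
    _ ≤ _ := h4
    _ = (∑ i, ∑ j, F i j ^ 2) * (l2norm c * l2norm c') := by
        rw [mul_mul_mul_comm, h5]

lemma roSet_nonempty {n p : ℕ} (F : Matrix (Fin n) (Fin p) ℝ) (k k' : ℕ) :
    (roSet F k k').Nonempty := ⟨_, frob_mem_roSet F k k'⟩

lemma roConst_spec {n p : ℕ} (F : Matrix (Fin n) (Fin p) ℝ) (k k' : ℕ)
    {c c' : Fin p → ℝ} (hc : IsSparse k c) (hc' : IsSparse k' c')
    (hd : ∀ i, c i = 0 ∨ c' i = 0) :
    |∑ i, F.mulVec c i * F.mulVec c' i| ≤ roConst F k k' * (l2norm c * l2norm c') := by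
  set M := l2norm c * l2norm c' with hM
  have hM0 : 0 ≤ M := mul_nonneg (l2norm_nonneg _) (l2norm_nonneg _)
  rcases eq_or_lt_of_le hM0 with h0 | h0
  · have := frob_mem_roSet F k k' c c' hc hc' hd
    rw [← hM, ← h0, mul_zero] at this
    rw [← h0, mul_zero]
    exact this
  · rw [roConst_eq_sInf, ← div_le_iff₀ h0]
    apply le_csInf (roSet_nonempty F k k')
    intro θ hθ
    rw [div_le_iff₀ h0]
    exact hθ c c' hc hc' hd

lemma roSet_mem_nonneg {n p : ℕ} (F : Matrix (Fin n) (Fin p) ℝ) {k k' : ℕ}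
    (hk : 1 ≤ k) (hk' : 1 ≤ k') (hp : k + k' ≤ p)
    {θ : ℝ} (hθ : θ ∈ roSet F k k') : 0 ≤ θ := by
  have hp2 : 2 ≤ p := by omega
  set i0 : Fin p := ⟨0, by omega⟩ with hi0
  set i1 : Fin p := ⟨1, by omega⟩ with hi1
  have hne : i0 ≠ i1 := by
    simp [hi0, hi1, Fin.ext_iff]
  set c : Fin p → ℝ := fun i => if i = i0 then 1 else 0 with hc
  set c' : Fin p → ℝ := fun i => if i = i1 then 1 else 0 with hc'
  have hl2 : ∀ j : Fin p, l2norm (fun i => if i = j then (1:ℝ) else 0) = 1 := by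
    intro j
    rw [l2norm]
    have hs : ∑ i, (if i = j then (1:ℝ) else 0) ^ 2 = 1 := by
      have : ∀ i : Fin p, (if i = j then (1:ℝ) else 0) ^ 2 = if i = j then 1 else 0 := by
        intro i; split <;> norm_num
      simp only [this]
      simp
    rw [hs, Real.sqrt_one]
  have hsc : IsSparse k c := by
    refine ⟨{i0}, by simpa using hk, fun i hi => ?_⟩
    simp only [Finset.mem_singleton] at hi
    simp [hc, hi]
  have hsc' : IsSparse k' c' := by
    refine ⟨{i1}, by simpa using hk', fun i hi => ?_⟩
    simp only [Finset.mem_singleton] at hi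
    simp [hc', hi]
  have hdisj : ∀ i, c i = 0 ∨ c' i = 0 := by
    intro i
    by_cases h : i = i0
    · right; simp [hc', h, hne]
    · left; simp [hc, h]
  have h := hθ c c' hsc hsc' hdisj
  rw [hc, hc', hl2 i0, hl2 i1, mul_one, mul_one] at h
  exact le_trans (abs_nonneg _) h

lemma roConst_nonneg {n p : ℕ} (F : Matrix (Fin n) (Fin p) ℝ) {k k' : ℕ}
    (hk : 1 ≤ k) (hk' : 1 ≤ k') (hp : k + k' ≤ p) : 0 ≤ roConst F k k' :=
  Real.sInf_nonneg fun _ hθ => roSet_mem_nonneg F hk hk' hp hθ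

lemma roConst_zero {n p : ℕ} (F : Matrix (Fin n) (Fin p) ℝ) (k : ℕ) :
    roConst F k 0 = 0 := by
  have huniv : roSet F k 0 = Set.univ := by
    ext θ
    simp only [Set.mem_univ, iff_true]
    intro c c' _ hc' _
    obtain ⟨s, hcard, hs⟩ := hc'
    have hs0 : s = ∅ := Finset.card_eq_zero.1 (Nat.le_zero.1 hcard)
    have hc'0 : c' = 0 := by
      funext i
      exact hs i (by simp [hs0])
    subst hc'0
    have : l2norm (0 : Fin p → ℝ) = 0 := by
      simp [l2norm]
    simp [Matrix.mulVec_zero, this]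
  rw [roConst_eq_sInf, huniv]
  apply Real.sInf_of_not_bddBelow
  rintro ⟨b, hb⟩
  have := hb (Set.mem_univ (b - 1))
  linarith

lemma cs2 (a b x y : ℝ) :
    a * x + b * y ≤ Real.sqrt (a ^ 2 + b ^ 2) * Real.sqrt (x ^ 2 + y ^ 2) := by
  have h : (a * x + b * y) ^ 2 ≤ (a ^ 2 + b ^ 2) * (x ^ 2 + y ^ 2) := by
    nlinarith [sq_nonneg (a * y - b * x)]
  calc a * x + b * y ≤ |a * x + b * y| := le_abs_self _
    _ = Real.sqrt ((a * x + b * y) ^ 2) := (Real.sqrt_sq_eq_abs _).symm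
    _ ≤ Real.sqrt ((a ^ 2 + b ^ 2) * (x ^ 2 + y ^ 2)) := Real.sqrt_le_sqrt h
    _ = _ := Real.sqrt_mul (by positivity) _

lemma roConst_add_le {n p : ℕ} (F : Matrix (Fin n) (Fin p) ℝ) (k a b : ℕ)
    (hk : 1 ≤ k) (hab : 1 ≤ a + b) (hp : k + (a + b) ≤ p) :
    roConst F k (a + b) ≤ Real.sqrt (roConst F k a ^ 2 + roConst F k b ^ 2) := by
  rw [roConst_eq_sInf]
  apply csInf_le ⟨0, fun θ hθ => roSet_mem_nonneg F hk hab hp hθ⟩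
  intro c c' hc hc' hd
  obtain ⟨s, hscard, hs⟩ := hc'
  obtain ⟨s₁, hs₁sub, hs₁card⟩ := Finset.exists_subset_card_eq (min_le_right a s.card)
  set s₂ : Finset (Fin p) := s \ s₁ with hs₂def
  have hs₂card : s₂.card ≤ b := by
    rw [hs₂def, Finset.card_sdiff_of_subset hs₁sub, hs₁card]
    omega
  set c₁ : Fin p → ℝ := fun i => if i ∈ s₁ then c' i else 0 with hc₁def
  set c₂ : Fin p → ℝ := fun i => if i ∈ s₂ then c' i else 0 with hc₂def
  have hc'eq : ∀ i, c' i = c₁ i + c₂ i := by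
    intro i
    by_cases h1 : i ∈ s₁
    · have h2 : i ∉ s₂ := by simp [hs₂def, h1]
      simp [hc₁def, hc₂def, h1, h2]
    · by_cases hmem : i ∈ s
      · have h2 : i ∈ s₂ := Finset.mem_sdiff.2 ⟨hmem, h1⟩
        simp [hc₁def, hc₂def, h1, h2]
      · have h2 : i ∉ s₂ := fun h => hmem (Finset.mem_sdiff.1 h).1
        simp [hc₁def, hc₂def, h1, h2, hs i hmem]
  have hsc₁ : IsSparse a c₁ :=
    ⟨s₁, by rw [hs₁card]; exact min_le_left _ _, fun i hi => if_neg hi⟩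
  have hsc₂ : IsSparse b c₂ := ⟨s₂, hs₂card, fun i hi => if_neg hi⟩
  have hd₁ : ∀ i, c i = 0 ∨ c₁ i = 0 := fun i =>
    (hd i).imp_right fun h => by simp [hc₁def, h]
  have hd₂ : ∀ i, c i = 0 ∨ c₂ i = 0 := fun i =>
    (hd i).imp_right fun h => by simp [hc₂def, h]
  have hsplit : ∑ i, F.mulVec c i * F.mulVec c' i
      = ∑ i, F.mulVec c i * F.mulVec c₁ i + ∑ i, F.mulVec c i * F.mulVec c₂ i := by
    have hcc : c' = c₁ + c₂ := funext hc'eq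
    rw [hcc, Matrix.mulVec_add, ← Finset.sum_add_distrib]
    exact Finset.sum_congr rfl fun i _ => by simp [Pi.add_apply, mul_add]
  have h1 := roConst_spec F k a hc hsc₁ hd₁
  have h2 := roConst_spec F k b hc hsc₂ hd₂
  have hnorm : l2norm c₁ ^ 2 + l2norm c₂ ^ 2 = l2norm c' ^ 2 := by
    rw [l2norm_sq, l2norm_sq, l2norm_sq, ← Finset.sum_add_distrib]
    apply Finset.sum_congr rfl
    intro i _
    by_cases h1 : i ∈ s₁
    · have h2 : i ∉ s₂ := by simp [hs₂def, h1]
      simp [hc₁def, hc₂def, h1, h2]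
    · by_cases hmem : i ∈ s
      · have h2 : i ∈ s₂ := Finset.mem_sdiff.2 ⟨hmem, h1⟩
        simp [hc₁def, hc₂def, h1, h2]
      · have h2 : i ∉ s₂ := fun h => hmem (Finset.mem_sdiff.1 h).1
        simp [hc₁def, hc₂def, h1, h2, hs i hmem]
  have hsq : Real.sqrt (l2norm c₁ ^ 2 + l2norm c₂ ^ 2) = l2norm c' := by
    rw [hnorm, Real.sqrt_sq (l2norm_nonneg _)]
  calc |∑ i, F.mulVec c i * F.mulVec c' i|
      ≤ |∑ i, F.mulVec c i * F.mulVec c₁ i| + |∑ i, F.mulVec c i * F.mulVec c₂ i| := by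
        rw [hsplit]; exact abs_add_le _ _
    _ ≤ roConst F k a * (l2norm c * l2norm c₁) + roConst F k b * (l2norm c * l2norm c₂) :=
        add_le_add h1 h2
    _ = l2norm c * (roConst F k a * l2norm c₁ + roConst F k b * l2norm c₂) := by ring
    _ ≤ l2norm c * (Real.sqrt (roConst F k a ^ 2 + roConst F k b ^ 2) *
          Real.sqrt (l2norm c₁ ^ 2 + l2norm c₂ ^ 2)) :=
        mul_le_mul_of_nonneg_left (cs2 _ _ _ _) (l2norm_nonneg _)
    _ = Real.sqrt (roConst F k a ^ 2 + roConst F k b ^ 2) * (l2norm c * l2norm c') := by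
        rw [hsq]; ring

/-- For positive integers `k, k₁, …, k_l` with `k + k₁ + ⋯ + k_l ≤ p`,
`θ_{k, k₁+⋯+k_l} ≤ √(θ_{k,k₁}² + ⋯ + θ_{k,k_l}²)`. -/
theorem roConst_sum_le {n p : ℕ} (F : Matrix (Fin n) (Fin p) ℝ)
    (k : ℕ) (hk : 1 ≤ k) (l : ℕ) (ks : Fin l → ℕ) (hks : ∀ i, 1 ≤ ks i)
    (hsum : k + ∑ i, ks i ≤ p) :
    roConst F k (∑ i, ks i) ≤ Real.sqrt (∑ i, (roConst F k (ks i)) ^ 2) := by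
  induction l with
  | zero =>
    simp only [Finset.univ_eq_empty, Finset.sum_empty]
    rw [roConst_zero, Real.sqrt_zero]
  | succ l ih =>
    simp only [Fin.sum_univ_succ] at hsum ⊢
    have htail : k + ∑ i : Fin l, ks i.succ ≤ p := by omega
    have hIH := ih (fun i => ks i.succ) (fun i => hks i.succ) htail
    have h1 := roConst_add_le F k (ks 0) (∑ i : Fin l, ks i.succ) hk
      (le_trans (hks 0) (Nat.le_add_right _ _)) (by omega)
    refine h1.trans (Real.sqrt_le_sqrt ?_)
    have h0 : 0 ≤ roConst F k (∑ i : Fin l, ks i.succ) := by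
      rcases Nat.eq_zero_or_pos (∑ i : Fin l, ks i.succ) with h | h
      · rw [h, roConst_zero]
      · exact roConst_nonneg F hk h (by omega)
    have hle : roConst F k (∑ i : Fin l, ks i.succ) ^ 2
        ≤ ∑ i : Fin l, roConst F k (ks i.succ) ^ 2 := by
      calc roConst F k (∑ i : Fin l, ks i.succ) ^ 2
          ≤ Real.sqrt (∑ i : Fin l, roConst F k (ks i.succ) ^ 2) ^ 2 :=
            pow_le_pow_left₀ h0 hIH 2
        _ = _ := Real.sq_sqrt (by positivity)
    linarith
end

section
/- Let w be a positive integer and let a₁ ≥ a₂ ≥ ⋯ ≥ a_w ≥ a_{w+1} ≥ ⋯ ≥ a_{2w} ≥ 0 be a descending chain of real numbers. Then √(a_{w+1}² + a_{w+2}² + ⋯ + a_{2w}²) ≤ (a₁ + a₂ + ⋯ + a_w + a_{w+1} + ⋯ + a_{2w}) / (2√w). -/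
/-!
Write `H = a₁ + ⋯ + a_w` and `T = a_{w+1} + ⋯ + a_{2w}`. Every tail term is at most
`a_{w+1}`, which is at most every head term, so `w · ∑ a_{w+i}² ≤ w · a_{w+1} · T ≤ H · T`,
and AM-GM `4HT ≤ (H + T)²` finishes.
-/

open Finset

theorem card_mul_sum_sq_le_sum_mul_sum {ι R : Type*} [CommSemiring R] [PartialOrder R]
    [IsOrderedRing R] {s t : Finset ι} {f : ι → R} {c : R}
    (hs : ∀ i ∈ s, c ≤ f i) (ht : ∀ i ∈ t, 0 ≤ f i ∧ f i ≤ c) :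
    #s * ∑ i ∈ t, f i ^ 2 ≤ (∑ i ∈ s, f i) * ∑ i ∈ t, f i := by
  have hsq : ∑ i ∈ t, f i ^ 2 ≤ c * ∑ i ∈ t, f i := by
    rw [mul_sum]
    refine sum_le_sum fun i hi => ?_
    rw [sq]
    exact mul_le_mul_of_nonneg_right (ht i hi).2 (ht i hi).1
  have hcard : #s * c ≤ ∑ i ∈ s, f i := by
    simpa only [nsmul_eq_mul] using card_nsmul_le_sum s f c hs
  calc #s * ∑ i ∈ t, f i ^ 2 ≤ #s * (c * ∑ i ∈ t, f i) := by gcongr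
    _ = #s * c * ∑ i ∈ t, f i := by rw [mul_assoc]
    _ ≤ (∑ i ∈ s, f i) * ∑ i ∈ t, f i := by
      gcongr
      exact sum_nonneg fun i hi => (ht i hi).1

theorem Real.sqrt_le_add_div_two_sqrt_of_mul_le {x n H T : ℝ} (hn : 0 < n) (hHT : 0 ≤ H + T)
    (h : n * x ≤ H * T) : √x ≤ (H + T) / (2 * √n) := by
  have hamgm : √(n * x) ≤ (H + T) / 2 :=
    Real.sqrt_le_iff.mpr ⟨by positivity, by nlinarith [four_mul_le_sq_add H T]⟩
  rw [le_div_iff₀ (by positivity)]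
  calc √x * (2 * √n) = 2 * √(n * x) := by rw [mul_comm n, Real.sqrt_mul' x hn.le]; ring
    _ ≤ H + T := by linarith

/-- For a nonincreasing chain `a₁ ≥ ⋯ ≥ a_{2w} ≥ 0` of real numbers,
`√(a_{w+1}² + ⋯ + a_{2w}²) ≤ (a₁ + ⋯ + a_{2w}) / (2√w)`. -/
theorem sqrt_sum_sq_tail_le (w : ℕ) (hw : 1 ≤ w) (a : ℕ → ℝ)
    (hmono : ∀ i j, 1 ≤ i → i ≤ j → j ≤ 2 * w → a j ≤ a i)
    (hnonneg : 0 ≤ a (2 * w)) :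
    Real.sqrt (∑ i ∈ Finset.Icc (w + 1) (2 * w), (a i) ^ 2) ≤
      (∑ i ∈ Finset.Icc 1 (2 * w), a i) / (2 * Real.sqrt w) := by
  have ha : ∀ i ∈ Icc 1 (2 * w), 0 ≤ a i := fun i hi =>
    hnonneg.trans (hmono i (2 * w) (mem_Icc.1 hi).1 (mem_Icc.1 hi).2 le_rfl)
  have hsum_nonneg : 0 ≤ ∑ i ∈ Icc 1 (2 * w), a i := sum_nonneg ha
  have hsplit : ∑ i ∈ Icc 1 (2 * w), a i =
      (∑ i ∈ Icc 1 w, a i) + ∑ i ∈ Icc (w + 1) (2 * w), a i := by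
    simpa only [← Icc_add_one_left_eq_Ioc, zero_add] using
      (sum_Ioc_consecutive a (Nat.zero_le w) (by omega : w ≤ 2 * w)).symm
  have head : ∀ i ∈ Icc 1 w, a (w + 1) ≤ a i := fun i hi => by
    rw [mem_Icc] at hi
    exact hmono i (w + 1) hi.1 (by omega) (by omega)
  have tail : ∀ i ∈ Icc (w + 1) (2 * w), 0 ≤ a i ∧ a i ≤ a (w + 1) := fun i hi => by
    rw [mem_Icc] at hi
    exact ⟨ha i (mem_Icc.2 ⟨by omega, hi.2⟩), hmono (w + 1) i (by omega) hi.1 hi.2⟩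
  have key := card_mul_sum_sq_le_sum_mul_sum head tail
  rw [Nat.card_Icc, add_tsub_cancel_right] at key
  rw [hsplit] at ⊢ hsum_nonneg
  exact Real.sqrt_le_add_div_two_sqrt_of_mul_le (Nat.cast_pos.2 hw) hsum_nonneg key
end

section
/- Let w be a positive integer and let a₁ ≥ a₂ ≥ ⋯ ≥ a_w ≥ a_{w+1} ≥ ⋯ ≥ a_{3w} ≥ 0 be a descending chain of real numbers. Then √(a_{w+1}² + a_{w+2}² + ⋯ + a_{3w}²) ≤ (a₁ + ⋯ + a_w + 2(a_{w+1} + ⋯ + a_{2w}) + a_{2w+1} + ⋯ + a_{3w}) / (2√(2w)). -/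
/-- For a nonincreasing chain `a₁ ≥ ⋯ ≥ a_{3w} ≥ 0` of real numbers,
`√(a_{w+1}² + ⋯ + a_{3w}²)
  ≤ (a₁ + ⋯ + a_w + 2(a_{w+1} + ⋯ + a_{2w}) + a_{2w+1} + ⋯ + a_{3w}) / (2√(2w))`. -/
theorem sqrt_sum_sq_tail_le' (w : ℕ) (hw : 1 ≤ w) (a : ℕ → ℝ)
    (hmono : ∀ i j, 1 ≤ i → i ≤ j → j ≤ 3 * w → a j ≤ a i)
    (hnonneg : 0 ≤ a (3 * w)) :
    Real.sqrt (∑ i ∈ Finset.Icc (w + 1) (3 * w), (a i) ^ 2) ≤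
      ((∑ i ∈ Finset.Icc 1 w, a i) + 2 * (∑ i ∈ Finset.Icc (w + 1) (2 * w), a i) +
        (∑ i ∈ Finset.Icc (2 * w + 1) (3 * w), a i)) / (2 * Real.sqrt (2 * w)) := by
  have hpos : ∀ i, 1 ≤ i → i ≤ 3 * w → 0 ≤ a i := fun i h1 h2 =>
    le_trans hnonneg (hmono i (3 * w) h1 h2 le_rfl)
  set A := ∑ i ∈ Finset.Icc 1 w, a i with hA
  set M := ∑ i ∈ Finset.Icc (w + 1) (2 * w), a i with hM
  set C := ∑ i ∈ Finset.Icc (2 * w + 1) (3 * w), a i with hC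
  have hAnn : 0 ≤ A := Finset.sum_nonneg fun i hi => by
    simp only [Finset.mem_Icc] at hi; exact hpos i hi.1 (by omega)
  have hMnn : 0 ≤ M := Finset.sum_nonneg fun i hi => by
    simp only [Finset.mem_Icc] at hi; exact hpos i (by omega) (by omega)
  have hCnn : 0 ≤ C := Finset.sum_nonneg fun i hi => by
    simp only [Finset.mem_Icc] at hi; exact hpos i (by omega) (by omega)
  -- split the sum of squares
  have hsplit : (∑ i ∈ Finset.Icc (w + 1) (3 * w), (a i) ^ 2) =
      (∑ i ∈ Finset.Icc (w + 1) (2 * w), (a i) ^ 2) +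
      (∑ i ∈ Finset.Icc (2 * w + 1) (3 * w), (a i) ^ 2) := by
    rw [show w + 1 = w + 1 from rfl]
    rw [Finset.Icc_add_one_left_eq_Ioc w (3 * w), Finset.Icc_add_one_left_eq_Ioc w (2 * w), Finset.Icc_add_one_left_eq_Ioc (2 * w) (3 * w)]
    exact (Finset.sum_Ioc_consecutive _ (by omega) (by omega)).symm
  set T1 := ∑ i ∈ Finset.Icc (w + 1) (2 * w), (a i) ^ 2 with hT1
  set T2 := ∑ i ∈ Finset.Icc (2 * w + 1) (3 * w), (a i) ^ 2 with hT2
  -- w * a (w+1) ≤ A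
  have hwA : (w : ℝ) * a (w + 1) ≤ A := by
    have := Finset.sum_le_sum (f := fun _ : ℕ => a (w + 1)) (g := a)
      (s := Finset.Icc 1 w) (fun i hi => by
        simp only [Finset.mem_Icc] at hi
        exact hmono i (w + 1) hi.1 (by omega) (by omega))
    have hcard : (Finset.Icc 1 w).card = w := by rw [Nat.card_Icc]; omega
    rw [Finset.sum_const, hcard, nsmul_eq_mul] at this
    rw [hA]; exact this
  have hwM : (w : ℝ) * a (2 * w + 1) ≤ M := by
    have := Finset.sum_le_sum (f := fun _ : ℕ => a (2 * w + 1)) (g := a)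
      (s := Finset.Icc (w + 1) (2 * w)) (fun i hi => by
        simp only [Finset.mem_Icc] at hi
        exact hmono i (2 * w + 1) (by omega) (by omega) (by omega))
    have hcard : (Finset.Icc (w + 1) (2 * w)).card = w := by
      rw [Nat.card_Icc]; omega
    rw [Finset.sum_const, hcard, nsmul_eq_mul] at this
    rw [hM]; exact this
  have hT1le : T1 ≤ a (w + 1) * M := by
    rw [hT1, hM, Finset.mul_sum]
    refine Finset.sum_le_sum fun i hi => ?_
    simp only [Finset.mem_Icc] at hi
    have h1 : a i ≤ a (w + 1) := hmono (w + 1) i (by omega) hi.1 (by omega)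
    have h2 : 0 ≤ a i := hpos i (by omega) (by omega)
    nlinarith
  have hT2le : T2 ≤ a (2 * w + 1) * C := by
    rw [hT2, hC, Finset.mul_sum]
    refine Finset.sum_le_sum fun i hi => ?_
    simp only [Finset.mem_Icc] at hi
    have h1 : a i ≤ a (2 * w + 1) := hmono (2 * w + 1) i (by omega) hi.1 (by omega)
    have h2 : 0 ≤ a i := hpos i (by omega) (by omega)
    nlinarith
  have haww : 0 ≤ a (w + 1) := hpos (w + 1) (by omega) (by omega)
  have haww2 : 0 ≤ a (2 * w + 1) := hpos (2 * w + 1) (by omega) (by omega)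
  have hwpos : (0 : ℝ) < w := by exact_mod_cast hw
  -- key inequality: 8w(T1+T2) ≤ (A+2M+C)^2
  have hkey : 8 * (w : ℝ) * (T1 + T2) ≤ (A + 2 * M + C) ^ 2 := by
    have e1 : (w : ℝ) * T1 ≤ A * M := by
      calc (w : ℝ) * T1 ≤ (w : ℝ) * (a (w + 1) * M) := by
            exact mul_le_mul_of_nonneg_left hT1le (le_of_lt hwpos)
        _ = ((w : ℝ) * a (w + 1)) * M := by ring
        _ ≤ A * M := mul_le_mul_of_nonneg_right hwA hMnn
    have e2 : (w : ℝ) * T2 ≤ M * C := by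
      calc (w : ℝ) * T2 ≤ (w : ℝ) * (a (2 * w + 1) * C) := by
            exact mul_le_mul_of_nonneg_left hT2le (le_of_lt hwpos)
        _ = ((w : ℝ) * a (2 * w + 1)) * C := by ring
        _ ≤ M * C := mul_le_mul_of_nonneg_right hwM hCnn
    nlinarith [sq_nonneg (A + C - 2 * M)]
  have hsq : Real.sqrt (2 * w) ^ 2 = 2 * w := Real.sq_sqrt (by positivity)
  have hrtpos : (0 : ℝ) < Real.sqrt (2 * w) := Real.sqrt_pos.2 (by positivity)
  have hfin : T1 + T2 ≤ ((A + 2 * M + C) / (2 * Real.sqrt (2 * w))) ^ 2 := by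
    rw [div_pow, le_div_iff₀ (by positivity)]
    calc (T1 + T2) * (2 * Real.sqrt (2 * w)) ^ 2 = 8 * (w : ℝ) * (T1 + T2) := by
          rw [mul_pow, hsq]; ring
      _ ≤ (A + 2 * M + C) ^ 2 := hkey
  calc Real.sqrt (∑ i ∈ Finset.Icc (w + 1) (3 * w), (a i) ^ 2)
      = Real.sqrt (T1 + T2) := by rw [hsplit]
    _ ≤ Real.sqrt (((A + 2 * M + C) / (2 * Real.sqrt (2 * w))) ^ 2) :=
        Real.sqrt_le_sqrt hfin
    _ = (A + 2 * M + C) / (2 * Real.sqrt (2 * w)) := by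
        rw [Real.sqrt_sq (by positivity)]
end

section
/- Let F be a real n×p matrix and let k ≥ 1 be an even integer with 2.5k ≤ p satisfying δ_{1.5k} + θ_{k,1.5k} < 1. Let β ∈ ℝ^p be a k-sparse vector and y = Fβ. Then β is the unique minimizer of ‖γ‖₁ over all γ ∈ ℝ^p with Fγ = y; that is, ℓ₁ minimization recovers β exactly. -/
open Finset

lemma card_filter_interval (N a b : ℕ) :
    ((univ : Finset (Fin N)).filter fun j : Fin N => a ≤ (j:ℕ) ∧ (j:ℕ) < b).card
      = min b N - a := by
  have himg : (((univ : Finset (Fin N)).filter fun j : Fin N => a ≤ (j:ℕ) ∧ (j:ℕ) < b).image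
      Fin.val) = Finset.Ico a (min b N) := by
    ext x
    simp only [mem_image, mem_filter, mem_univ, true_and, mem_Ico, lt_min_iff]
    constructor
    · rintro ⟨j, ⟨h1, h2⟩, rfl⟩
      exact ⟨h1, h2, j.isLt⟩
    · rintro ⟨h1, h2, h3⟩
      exact ⟨⟨x, h3⟩, ⟨h1, h2⟩, rfl⟩
  have hc := Finset.card_image_of_injective
      ((univ : Finset (Fin N)).filter fun j : Fin N => a ≤ (j:ℕ) ∧ (j:ℕ) < b) Fin.val_injective
  rw [himg] at hc
  rw [← hc, Nat.card_Ico]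

set_option maxHeartbeats 2000000 in
lemma nsp {n p m : ℕ} (F : Matrix (Fin n) (Fin p) ℝ)
    (hm : 1 ≤ m)
    (δ θ : ℝ)
    (hδset : ∀ c : Fin p → ℝ, IsSparse (3*m) c →
      Real.sqrt (1 - δ) * l2norm c ≤ l2norm (F.mulVec c) ∧
      l2norm (F.mulVec c) ≤ Real.sqrt (1 + δ) * l2norm c)
    (hθset : ∀ c c' : Fin p → ℝ, IsSparse (2*m) c → IsSparse (3*m) c' →
      (∀ i, c i = 0 ∨ c' i = 0) →
      |∑ i, F.mulVec c i * F.mulVec c' i| ≤ θ * (l2norm c * l2norm c'))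
    (hθ0 : 0 ≤ θ) (hsum : δ + θ < 1)
    (h : Fin p → ℝ) (hker : F.mulVec h = 0)
    (T₀ : Finset (Fin p)) (hT₀ : T₀.card ≤ 2*m)
    (hcone : ∑ x ∈ T₀ᶜ, |h x| ≤ ∑ x ∈ T₀, |h x|) :
    h = 0 := by
  classical
  set N := T₀ᶜ.card with hN
  let e : Fin N ≃o {x // x ∈ T₀ᶜ} := T₀ᶜ.orderIsoOfFin rfl
  let f : Fin N → ℝ := fun j => -|h (e j)|
  let σ := Tuple.sort f
  let g : Fin N → Fin p := fun j => (e (σ j) : Fin p)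
  let v : Fin N → ℝ := fun j => |h (g j)|
  have hginj : Function.Injective g := by
    intro x y hxy
    exact σ.injective (e.injective (Subtype.val_injective hxy))
  have hgmem : ∀ j, g j ∈ T₀ᶜ := fun j => (e (σ j)).2
  have hgsurj : ∀ x ∈ T₀ᶜ, ∃ j, g j = x := by
    intro x hx
    exact ⟨σ⁻¹ (e.symm ⟨x, hx⟩), by simp [g, σ]⟩
  have hvanti : ∀ j j' : Fin N, (j:ℕ) ≤ (j':ℕ) → v j' ≤ v j := by
    intro j j' hjj
    have h2 := Tuple.monotone_sort f (a := j) (b := j') hjj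
    simp only [Function.comp, f] at h2
    have h3 : -v j ≤ -v j' := h2
    linarith
  have hvnn : ∀ j, 0 ≤ v j := fun j => abs_nonneg _
  -- index blocks
  let Jset : ℕ → ℕ → Finset (Fin N) := fun a b =>
    (univ : Finset (Fin N)).filter fun j : Fin N => a ≤ (j:ℕ) ∧ (j:ℕ) < b
  let T1idx : Finset (Fin N) := Jset 0 m
  let Ji : ℕ → Finset (Fin N) := fun i => Jset (m + 2*m*i) (m + 2*m*(i+1))
  have hJcard : ∀ a b, (Jset a b).card = min b N - a := fun a b => card_filter_interval N a b
  have hJicard : ∀ i, (Ji i).card = min (m + 2*m*i + 2*m) N - (m + 2*m*i) := by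
    intro i
    have hc := hJcard (m + 2*m*i) (m + 2*m*(i+1))
    rw [hc, show m + 2*m*(i+1) = m + 2*m*i + 2*m from by ring]
  have hJirange : ∀ i (j : Fin N), j ∈ Ji i ↔ m + 2*m*i ≤ (j:ℕ) ∧ (j:ℕ) < m + 2*m*i + 2*m := by
    intro i j
    simp only [Ji, Jset, mem_filter, mem_univ, true_and, Nat.mul_succ]
    omega
  have hT1range : ∀ j : Fin N, j ∈ T1idx ↔ (j:ℕ) < m := by
    intro j
    simp only [T1idx, Jset, mem_filter, mem_univ, true_and, Nat.zero_le, true_and]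
  have hJuniq : ∀ i i' (j : Fin N), j ∈ Ji i → j ∈ Ji i' → i = i' := by
    intro i i' j hi hi'
    rw [hJirange] at hi hi'
    by_contra hne
    rcases Nat.lt_or_ge i i' with hlt | hge
    · have : 2*m*(i+1) ≤ 2*m*i' := Nat.mul_le_mul_left _ hlt
      rw [Nat.mul_succ] at this
      omega
    · have hlt : i' < i := by omega
      have : 2*m*(i'+1) ≤ 2*m*i := Nat.mul_le_mul_left _ hlt
      rw [Nat.mul_succ] at this
      omega
  have hfind : ∀ j : Fin N, m ≤ (j:ℕ) → ∃ i, i < N ∧ j ∈ Ji i := by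
    intro j hj
    refine ⟨((j:ℕ) - m) / (2*m), ?_, ?_⟩
    · have h1 : ((j:ℕ) - m) / (2*m) ≤ (j:ℕ) - m := Nat.div_le_self _ _
      have := j.isLt
      omega
    · rw [hJirange]
      have h1 := Nat.div_add_mod ((j:ℕ) - m) (2*m)
      have h2 : ((j:ℕ) - m) % (2*m) < 2*m := Nat.mod_lt _ (by omega)
      omega
  -- finsets in Fin p
  let T₁ : Finset (Fin p) := T1idx.image g
  let A : ℕ → Finset (Fin p) := fun i => (Ji i).image g
  let restr : Finset (Fin p) → (Fin p → ℝ) := fun S x => if x ∈ S then h x else 0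
  let c : Fin p → ℝ := restr (T₀ ∪ T₁)
  let a : ℕ → Fin p → ℝ := fun i => restr (A i)
  have hgmemA : ∀ i (j : Fin N), g j ∈ A i ↔ j ∈ Ji i := by
    intro i j
    constructor
    · intro hj
      obtain ⟨j', hj', hjj⟩ := Finset.mem_image.1 hj
      rwa [← hginj hjj]
    · intro hj; exact Finset.mem_image_of_mem g hj
  have hgmemT₁ : ∀ j : Fin N, g j ∈ T₁ ↔ j ∈ T1idx := by
    intro j
    constructor
    · intro hj
      obtain ⟨j', hj', hjj⟩ := Finset.mem_image.1 hj
      rwa [← hginj hjj]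
    · intro hj; exact Finset.mem_image_of_mem g hj
  -- decomposition
  have hdecomp : ∀ x, c x + ∑ i ∈ range N, a i x = h x := by
    intro x
    by_cases hx : x ∈ T₀ ∪ T₁
    · have hz : ∀ i ∈ range N, a i x = 0 := by
        intro i _
        have hxA : x ∉ A i := by
          intro hxA
          obtain ⟨j, hj, rfl⟩ := Finset.mem_image.1 hxA
          rw [hJirange] at hj
          rcases Finset.mem_union.1 hx with hx0 | hx1
          · exact absurd hx0 (Finset.mem_compl.1 (hgmem j))
          · have := (hT1range j).1 ((hgmemT₁ j).1 hx1)
            omega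
        simp [a, restr, hxA]
      rw [Finset.sum_eq_zero hz, add_zero]
      show (if x ∈ T₀ ∪ T₁ then h x else 0) = h x
      rw [if_pos hx]
    · have hxc : x ∈ T₀ᶜ := by
        rcases Finset.notMem_union.1 hx with ⟨h1, _⟩
        exact Finset.mem_compl.2 h1
      obtain ⟨j, rfl⟩ := hgsurj x hxc
      have hxT₁ : g j ∉ T₁ := fun hh => hx (Finset.mem_union_right _ hh)
      have hjm : m ≤ (j:ℕ) := by
        by_contra hc'
        exact hxT₁ ((hgmemT₁ j).2 ((hT1range j).2 (by omega)))
      obtain ⟨i₀, hi₀N, hji₀⟩ := hfind j hjm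
      have hsum1 : ∑ i ∈ range N, a i (g j) = a i₀ (g j) := by
        apply Finset.sum_eq_single_of_mem i₀ (Finset.mem_range.2 hi₀N)
        intro i _ hi
        have hnot : g j ∉ A i := by
          intro hgA
          exact hi (hJuniq i i₀ j ((hgmemA i j).1 hgA) hji₀)
        simp [a, restr, hnot]
      rw [hsum1]
      have hcx : c (g j) = 0 := by
        show (if g j ∈ T₀ ∪ T₁ then h (g j) else 0) = 0
        rw [if_neg hx]
      rw [hcx, zero_add]
      show (if g j ∈ A i₀ then h (g j) else 0) = h (g j)
      rw [if_pos ((hgmemA i₀ j).2 hji₀)]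
  -- linearity of mulVec over the decomposition
  have hFdecomp : ∀ x, F.mulVec c x + ∑ i ∈ range N, F.mulVec (a i) x = 0 := by
    intro x
    have e1 : ∀ y, F x y * h y = F x y * c y + ∑ i ∈ range N, F x y * a i y := by
      intro y
      rw [← hdecomp y, mul_add, Finset.mul_sum]
    have e2 : (0:ℝ) = ∑ y, F x y * h y := by
      have := congrFun hker x
      simp only [Matrix.mulVec, dotProduct, Pi.zero_apply] at this
      rw [this]
    rw [Finset.sum_congr rfl (fun y _ => e1 y), Finset.sum_add_distrib] at e2
    rw [Finset.sum_comm] at e2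
    simp only [Matrix.mulVec, dotProduct]
    rw [← e2]
  -- block quantities
  let Q : ℕ → ℝ := fun i => ∑ j ∈ Ji i, v j
  let a₁ : ℝ := ∑ j ∈ T1idx, v j
  let P : ℕ → ℝ := fun i => if i = 0 then 2*a₁ else Q (i-1)
  have hQnn : ∀ i, 0 ≤ Q i := fun i => Finset.sum_nonneg fun j _ => hvnn j
  have ha₁nn : 0 ≤ a₁ := Finset.sum_nonneg fun j _ => hvnn j
  have hPnn : ∀ i, 0 ≤ P i := by
    intro i
    by_cases hi : i = 0
    · simp [P, hi]; linarith
    · simp [P, hi]; exact hQnn _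
  have hS2a : ∀ i, (∑ x, a i x ^2) = ∑ j ∈ Ji i, v j ^2 := by
    intro i
    have e1 : ∀ x, a i x ^2 = if x ∈ A i then h x ^2 else 0 := by
      intro x
      show (if x ∈ A i then h x else 0)^2 = _
      split <;> simp
    rw [Finset.sum_congr rfl (fun x _ => e1 x), Finset.sum_ite_mem, Finset.univ_inter]
    rw [Finset.sum_image (fun x _ y _ hxy => hginj hxy)]
    exact Finset.sum_congr rfl fun j _ => (sq_abs _).symm
  -- per-element bound  2m * v j ≤ P i  for j ∈ Ji i
  have hblock : ∀ i, ∀ j ∈ Ji i, 2*(m:ℝ) * v j ≤ P i := by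
    intro i j hj
    rcases i with _ | i
    · -- i = 0 : compare with T1idx
      have hjm : m + 2*m*0 ≤ (j:ℕ) := ((hJirange 0 j).1 hj).1
      have hmN : m ≤ N := by
        have := j.isLt
        omega
      have hcard : T1idx.card = m := by
        have := hJcard 0 m
        simp only [T1idx]
        omega
      have hle : ∀ j' ∈ T1idx, v j ≤ v j' := by
        intro j' hj'
        apply hvanti
        have := (hT1range j').1 hj'
        omega
      have hns := Finset.card_nsmul_le_sum T1idx v (v j) hle
      rw [hcard, nsmul_eq_mul] at hns
      have : (m:ℝ) * v j ≤ a₁ := hns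
      have hP0 : P 0 = 2*a₁ := by simp [P]
      rw [hP0]
      linarith
    · -- i+1 : compare with Ji i
      have hjm : m + 2*m*(i+1) ≤ (j:ℕ) := ((hJirange (i+1) j).1 hj).1
      have hfull : m + 2*m*i + 2*m ≤ N := by
        have h1 := j.isLt
        have h2 : 2*m*(i+1) = 2*m*i + 2*m := by ring
        omega
      have hcard : (Ji i).card = 2*m := by
        rw [hJicard i]
        omega
      have hle : ∀ j' ∈ Ji i, v j ≤ v j' := by
        intro j' hj'
        apply hvanti
        have h1 := ((hJirange i j').1 hj').2
        have h2 : 2*m*(i+1) = 2*m*i + 2*m := by ring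
        omega
      have hns := Finset.card_nsmul_le_sum (Ji i) v (v j) hle
      rw [hcard, nsmul_eq_mul] at hns
      have h3 : ((2*m : ℕ):ℝ) * v j ≤ Q i := hns
      have hP : P (i+1) = Q i := by simp [P]
      rw [hP]
      push_cast at h3
      linarith
  have hS2aPQ : ∀ i, 2*(m:ℝ) * (∑ j ∈ Ji i, v j^2) ≤ P i * Q i := by
    intro i
    have e1 : 2*(m:ℝ) * (∑ j ∈ Ji i, v j^2) = ∑ j ∈ Ji i, (2*(m:ℝ)*v j) * v j := by
      rw [Finset.mul_sum]
      exact Finset.sum_congr rfl fun j _ => by ring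
    rw [e1]
    calc ∑ j ∈ Ji i, (2*(m:ℝ)*v j) * v j
        ≤ ∑ j ∈ Ji i, P i * v j :=
          Finset.sum_le_sum fun j hj => mul_le_mul_of_nonneg_right (hblock i j hj) (hvnn j)
      _ = P i * Q i := by rw [← Finset.mul_sum]
  have hm' : (0:ℝ) < m := by exact_mod_cast hm
  have hsqrt2m : (0:ℝ) < Real.sqrt (2*(m:ℝ)) := Real.sqrt_pos.2 (by linarith)
  have hl2a : ∀ i, Real.sqrt (∑ j ∈ Ji i, v j^2) ≤ (P i + Q i) / (2*Real.sqrt (2*(m:ℝ))) := by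
    intro i
    have h1 : (∑ j ∈ Ji i, v j^2) ≤ ((P i + Q i) / (2*Real.sqrt (2*(m:ℝ))))^2 := by
      have h2 : ((P i + Q i) / (2*Real.sqrt (2*(m:ℝ))))^2 = (P i + Q i)^2 / (4*(2*(m:ℝ))) := by
        rw [div_pow, mul_pow, Real.sq_sqrt (by linarith)]
        ring_nf
      rw [h2, le_div_iff₀ (by linarith)]
      nlinarith [hS2aPQ i, sq_nonneg (P i - Q i)]
    calc Real.sqrt (∑ j ∈ Ji i, v j^2)
        ≤ Real.sqrt (((P i + Q i) / (2*Real.sqrt (2*(m:ℝ))))^2) := Real.sqrt_le_sqrt h1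
      _ = (P i + Q i) / (2*Real.sqrt (2*(m:ℝ))) := by
          apply Real.sqrt_sq
          have := hPnn i
          have := hQnn i
          positivity
  -- total ℓ1 mass split
  let L : ℝ := ∑ j, v j
  have hLsplit : a₁ + ∑ i ∈ range N, Q i = L := by
    have hdisj : (↑(range N) : Set ℕ).PairwiseDisjoint Ji := by
      intro i _ i' _ hii
      simp only [Function.onFun]
      rw [Finset.disjoint_left]
      intro j hj hj'
      exact hii (hJuniq i i' j hj hj')
    have hbi : (range N).biUnion Ji
        = (univ : Finset (Fin N)).filter (fun j : Fin N => ¬ ((j:ℕ) < m)) := by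
      ext j
      simp only [Finset.mem_biUnion, Finset.mem_range, Finset.mem_filter, Finset.mem_univ,
        true_and, not_lt]
      constructor
      · rintro ⟨i, hi, hji⟩
        have := ((hJirange i j).1 hji).1
        omega
      · intro hj
        exact hfind j hj
    have hsQ : ∑ i ∈ range N, Q i = ∑ j ∈ (univ : Finset (Fin N)).filter
        (fun j : Fin N => ¬ ((j:ℕ) < m)), v j := by
      rw [← hbi, Finset.sum_biUnion hdisj]
    have hsa : a₁ = ∑ j ∈ (univ : Finset (Fin N)).filter (fun j : Fin N => (j:ℕ) < m), v j := by
      apply Finset.sum_congr _ (fun j _ => rfl)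
      ext j
      simp only [T1idx, Jset, Finset.mem_filter, Finset.mem_univ, true_and]
      omega
    rw [hsQ, hsa]
    exact Finset.sum_filter_add_sum_filter_not univ _ v
  -- transfer : L equals the ℓ1 mass of h on T₀ᶜ
  have himgT : (univ : Finset (Fin N)).image g = T₀ᶜ := by
    ext x
    simp only [Finset.mem_image, Finset.mem_univ, true_and]
    constructor
    · rintro ⟨j, rfl⟩; exact hgmem j
    · intro hx; exact hgsurj x hx
  have hLeq : L = ∑ x ∈ T₀ᶜ, |h x| := by
    rw [← himgT, Finset.sum_image (fun x _ y _ hxy => hginj hxy)]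
  -- sum of block norms bounded
  have hsumP : ∀ M, ∑ i ∈ range M, P i ≤ 2*a₁ + ∑ i ∈ range M, Q i := by
    intro M
    rcases M with _ | N'
    · simpa using (by linarith : (0:ℝ) ≤ 2*a₁)
    · rw [Finset.sum_range_succ' P N']
      have e1 : ∀ i, P (i+1) = Q i := fun i => by simp [P]
      have e2 : P 0 = 2*a₁ := by simp [P]
      rw [Finset.sum_congr rfl (fun i _ => e1 i), e2]
      have : ∑ i ∈ range N', Q i ≤ ∑ i ∈ range (N'+1), Q i :=
        Finset.sum_le_sum_of_subset_of_nonneg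
          (Finset.range_subset_range.2 (Nat.le_succ N')) (fun i _ _ => hQnn i)
      linarith
  have hsuml2 : ∑ i ∈ range N, Real.sqrt (∑ j ∈ Ji i, v j^2)
      ≤ L / Real.sqrt (2*(m:ℝ)) := by
    calc ∑ i ∈ range N, Real.sqrt (∑ j ∈ Ji i, v j^2)
        ≤ ∑ i ∈ range N, (P i + Q i) / (2*Real.sqrt (2*(m:ℝ))) :=
          Finset.sum_le_sum fun i _ => hl2a i
      _ = (∑ i ∈ range N, (P i + Q i)) / (2*Real.sqrt (2*(m:ℝ))) := by
          rw [Finset.sum_div]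
      _ ≤ (2*a₁ + 2*(∑ i ∈ range N, Q i)) / (2*Real.sqrt (2*(m:ℝ))) := by
          gcongr
          rw [Finset.sum_add_distrib]
          linarith [hsumP N]
      _ = (a₁ + ∑ i ∈ range N, Q i) / Real.sqrt (2*(m:ℝ)) := by
          rw [show 2*a₁ + 2*(∑ i ∈ range N, Q i) = 2*(a₁ + ∑ i ∈ range N, Q i) from by ring]
          exact mul_div_mul_left _ _ two_ne_zero
      _ = L / Real.sqrt (2*(m:ℝ)) := by rw [hLsplit]
  -- Cauchy-Schwarz on T₀
  have hcauchy : ∑ x ∈ T₀, |h x| ≤ Real.sqrt (2*(m:ℝ)) * Real.sqrt (∑ x ∈ T₀, h x^2) := by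
    have h1 := Finset.sum_mul_sq_le_sq_mul_sq T₀ (fun x => |h x|) (fun _ => (1:ℝ))
    simp only [mul_one, one_pow, Finset.sum_const, nsmul_eq_mul] at h1
    have h2 : (∑ x ∈ T₀, |h x|^2) = ∑ x ∈ T₀, h x^2 :=
      Finset.sum_congr rfl fun x _ => sq_abs _
    rw [h2] at h1
    have h3 : (∑ x ∈ T₀, |h x|)^2 ≤ (2*(m:ℝ)) * (∑ x ∈ T₀, h x^2) := by
      have hc : ((T₀.card : ℝ)) ≤ 2*(m:ℝ) := by exact_mod_cast hT₀
      have hnn : (0:ℝ) ≤ ∑ x ∈ T₀, h x^2 := Finset.sum_nonneg fun x _ => sq_nonneg _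
      nlinarith
    have h4 : (0:ℝ) ≤ ∑ x ∈ T₀, |h x| := Finset.sum_nonneg fun x _ => abs_nonneg _
    calc ∑ x ∈ T₀, |h x| ≤ Real.sqrt ((2*(m:ℝ)) * (∑ x ∈ T₀, h x^2)) :=
          (Real.le_sqrt h4 (by nlinarith)).2 h3
      _ = Real.sqrt (2*(m:ℝ)) * Real.sqrt (∑ x ∈ T₀, h x^2) :=
          Real.sqrt_mul (by linarith) _
  -- S2 of c
  have hS2c : (∑ x, c x^2) = ∑ x ∈ T₀ ∪ T₁, h x^2 := by
    have e1 : ∀ x, c x ^2 = if x ∈ T₀ ∪ T₁ then h x ^2 else 0 := by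
      intro x
      show (if x ∈ T₀ ∪ T₁ then h x else 0)^2 = _
      split <;> simp
    rw [Finset.sum_congr rfl (fun x _ => e1 x), Finset.sum_ite_mem, Finset.univ_inter]
  have hT₀sub : (∑ x ∈ T₀, h x^2) ≤ ∑ x, c x^2 := by
    rw [hS2c]
    exact Finset.sum_le_sum_of_subset_of_nonneg Finset.subset_union_left
      (fun x _ _ => sq_nonneg _)
  have hS2cnn : (0:ℝ) ≤ ∑ x, c x^2 := Finset.sum_nonneg fun x _ => sq_nonneg _
  set X := Real.sqrt (∑ x, c x^2) with hX
  have hXnn : 0 ≤ X := Real.sqrt_nonneg _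
  have hXX : X^2 = ∑ x, c x^2 := Real.sq_sqrt hS2cnn
  -- master tail bound
  have hsuml2X : ∑ i ∈ range N, Real.sqrt (∑ x, a i x^2) ≤ X := by
    have e1 : ∀ i, Real.sqrt (∑ x, a i x^2) = Real.sqrt (∑ j ∈ Ji i, v j^2) := fun i => by
      rw [hS2a i]
    calc ∑ i ∈ range N, Real.sqrt (∑ x, a i x^2)
        = ∑ i ∈ range N, Real.sqrt (∑ j ∈ Ji i, v j^2) :=
          Finset.sum_congr rfl fun i _ => e1 i
      _ ≤ L / Real.sqrt (2*(m:ℝ)) := hsuml2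
      _ ≤ (∑ x ∈ T₀, |h x|) / Real.sqrt (2*(m:ℝ)) := by
          gcongr
          rw [hLeq]
          exact hcone
      _ ≤ (Real.sqrt (2*(m:ℝ)) * Real.sqrt (∑ x ∈ T₀, h x^2)) / Real.sqrt (2*(m:ℝ)) := by
          gcongr
      _ = Real.sqrt (∑ x ∈ T₀, h x^2) := by
          field_simp
      _ ≤ X := Real.sqrt_le_sqrt hT₀sub
  -- sparsity facts
  have hT1card : T₁.card ≤ m := by
    calc T₁.card ≤ T1idx.card := Finset.card_image_le
      _ ≤ m := by
          have := hJcard 0 m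
          simp only [T1idx]
          omega
  have hsp_c : IsSparse (3*m) c := by
    refine ⟨T₀ ∪ T₁, ?_, fun x hx => by
      show (if x ∈ T₀ ∪ T₁ then h x else 0) = 0
      rw [if_neg hx]⟩
    calc (T₀ ∪ T₁).card ≤ T₀.card + T₁.card := Finset.card_union_le _ _
      _ ≤ 3*m := by omega
  have hsp_a : ∀ i, IsSparse (2*m) (a i) := by
    intro i
    refine ⟨A i, ?_, fun x hx => by
      show (if x ∈ A i then h x else 0) = 0
      rw [if_neg hx]⟩
    calc (A i).card ≤ (Ji i).card := Finset.card_image_le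
      _ ≤ 2*m := by
          rw [hJicard i]
          omega
  have hdisj_supp : ∀ i, ∀ x, a i x = 0 ∨ c x = 0 := by
    intro i x
    by_cases hx : x ∈ A i
    · right
      obtain ⟨j, hj, rfl⟩ := Finset.mem_image.1 hx
      have h1 : g j ∉ T₀ := Finset.mem_compl.1 (hgmem j)
      have h2 : g j ∉ T₁ := by
        intro hh
        have := (hT1range j).1 ((hgmemT₁ j).1 hh)
        have := ((hJirange i j).1 hj).1
        omega
      have hnu : g j ∉ T₀ ∪ T₁ := by
        rw [Finset.mem_union]
        tauto
      show (if g j ∈ T₀ ∪ T₁ then h (g j) else 0) = 0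
      rw [if_neg hnu]
    · left
      show (if x ∈ A i then h x else 0) = 0
      rw [if_neg hx]
  -- RIP lower bound
  have hδ1 : δ < 1 := by linarith
  have hS2Fcnn : (0:ℝ) ≤ ∑ x, (F.mulVec c x)^2 := Finset.sum_nonneg fun x _ => sq_nonneg _
  have hRIP : (1-δ) * (∑ x, c x^2) ≤ ∑ x, (F.mulVec c x)^2 := by
    have h1 := (hδset c hsp_c).1
    have e1 : Real.sqrt (1-δ)^2 = 1-δ := Real.sq_sqrt (by linarith)
    have e2 : l2norm c ^2 = ∑ x, c x^2 := Real.sq_sqrt hS2cnn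
    have e3 : l2norm (F.mulVec c)^2 = ∑ x, (F.mulVec c x)^2 := Real.sq_sqrt hS2Fcnn
    have h2 : (Real.sqrt (1-δ) * l2norm c)^2 ≤ l2norm (F.mulVec c)^2 := by
      apply sq_le_sq'
      · have : 0 ≤ Real.sqrt (1-δ) * l2norm c := by positivity
        have : 0 ≤ l2norm (F.mulVec c) := Real.sqrt_nonneg _
        linarith
      · exact h1
    rw [mul_pow, e1, e2, e3] at h2
    exact h2
  -- RO bound
  have hRO : ∀ i ∈ range N, |∑ x, F.mulVec (a i) x * F.mulVec c x|
      ≤ θ * (Real.sqrt (∑ x, a i x^2) * X) := by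
    intro i _
    have := hθset (a i) c (hsp_a i) hsp_c (hdisj_supp i)
    simpa [l2norm, hX] using this
  -- key estimate
  have hkey : ∑ x, (F.mulVec c x)^2 ≤ θ * (∑ x, c x^2) := by
    have e0 : ∀ x, F.mulVec c x = - ∑ i ∈ range N, F.mulVec (a i) x := by
      intro x
      have := hFdecomp x
      linarith
    have e1 : ∑ x, (F.mulVec c x)^2
        = - ∑ i ∈ range N, ∑ x, F.mulVec (a i) x * F.mulVec c x := by
      have e2 : ∀ x, (F.mulVec c x)^2
          = - ∑ i ∈ range N, F.mulVec (a i) x * F.mulVec c x := by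
        intro x
        calc (F.mulVec c x)^2 = F.mulVec c x * F.mulVec c x := sq (F.mulVec c x) ▸ by ring
          _ = (- ∑ i ∈ range N, F.mulVec (a i) x) * F.mulVec c x := by rw [← e0 x]
          _ = - ∑ i ∈ range N, F.mulVec (a i) x * F.mulVec c x := by
              rw [neg_mul, Finset.sum_mul]
      rw [Finset.sum_congr rfl (fun x _ => e2 x), Finset.sum_neg_distrib, Finset.sum_comm]
    rw [e1]
    calc - ∑ i ∈ range N, ∑ x, F.mulVec (a i) x * F.mulVec c x
        ≤ |∑ i ∈ range N, ∑ x, F.mulVec (a i) x * F.mulVec c x| := neg_le_abs _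
      _ ≤ ∑ i ∈ range N, |∑ x, F.mulVec (a i) x * F.mulVec c x| :=
          Finset.abs_sum_le_sum_abs _ _
      _ ≤ ∑ i ∈ range N, θ * (Real.sqrt (∑ x, a i x^2) * X) :=
          Finset.sum_le_sum hRO
      _ = θ * X * ∑ i ∈ range N, Real.sqrt (∑ x, a i x^2) := by
          rw [Finset.mul_sum]
          exact Finset.sum_congr rfl fun i _ => by ring
      _ ≤ θ * X * X := by
          apply mul_le_mul_of_nonneg_left hsuml2X (by positivity)
      _ = θ * (∑ x, c x^2) := by
          rw [mul_assoc, ← sq, hXX]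
  -- conclude c = 0
  have hczero : ∀ x, c x = 0 := by
    have hS2c0 : (∑ x, c x^2) = 0 := by
      nlinarith [hRIP, hkey, hS2cnn, hS2Fcnn]
    intro x
    have := (Finset.sum_eq_zero_iff_of_nonneg (fun x _ => sq_nonneg (c x))).1 hS2c0 x
      (Finset.mem_univ x)
    exact pow_eq_zero_iff (two_ne_zero) |>.1 this
  -- h vanishes on T₀
  have hT₀zero : ∀ x ∈ T₀, h x = 0 := by
    intro x hx
    have := hczero x
    rwa [show c x = h x from by
      show (if x ∈ T₀ ∪ T₁ then h x else 0) = h x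
      rw [if_pos (Finset.mem_union_left _ hx)]] at this
  have hsum0 : ∑ x ∈ T₀, |h x| = 0 := Finset.sum_eq_zero fun x hx => by
    rw [hT₀zero x hx, abs_zero]
  have hcompl0 : ∑ x ∈ T₀ᶜ, |h x| = 0 := by
    have h1 : (0:ℝ) ≤ ∑ x ∈ T₀ᶜ, |h x| := Finset.sum_nonneg fun x _ => abs_nonneg _
    rw [hsum0] at hcone
    linarith
  funext x
  by_cases hx : x ∈ T₀
  · exact hT₀zero x hx
  · have := (Finset.sum_eq_zero_iff_of_nonneg (fun x _ => abs_nonneg (h x))).1 hcompl0 x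
      (Finset.mem_compl.2 hx)
    simpa using this

set_option maxHeartbeats 1000000 in
/-- Exact recovery in the noiseless case: with `k = 2*m` even, if
`δ_{1.5k} + θ_{k,1.5k} < 1` and `β` is `k`-sparse, then `β` is the unique ℓ₁ minimizer
subject to `Fγ = Fβ`: any other feasible `γ` has strictly larger ℓ₁ norm. -/
theorem exact_recovery_noiseless {n p m : ℕ} (F : Matrix (Fin n) (Fin p) ℝ)
    (hm : 1 ≤ m) (hp : 5 * m ≤ p)
    (hcond : ripConst F (3 * m) + roConst F (2 * m) (3 * m) < 1)
    (β : Fin p → ℝ) (hβ : IsSparse (2 * m) β) (y : Fin n → ℝ) (hy : y = F.mulVec β) :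
    ∀ γ : Fin p → ℝ, F.mulVec γ = y → γ ≠ β → l1norm β < l1norm γ := by
  classical
  intro γ hγ hγβ
  have hl2nn : ∀ (q : ℕ) (w : Fin q → ℝ), 0 ≤ l2norm w := fun q w => Real.sqrt_nonneg _
  set Sδ := {δ : ℝ | ∀ c : Fin p → ℝ, IsSparse (3*m) c →
    Real.sqrt (1 - δ) * l2norm c ≤ l2norm (F.mulVec c) ∧
    l2norm (F.mulVec c) ≤ Real.sqrt (1 + δ) * l2norm c} with hSδ
  set Sθ := {θ : ℝ | ∀ c c' : Fin p → ℝ, IsSparse (2*m) c → IsSparse (3*m) c' →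
    (∀ i, c i = 0 ∨ c' i = 0) →
    |∑ i, F.mulVec c i * F.mulVec c' i| ≤ θ * (l2norm c * l2norm c')} with hSθ
  have hripeq : ripConst F (3*m) = sInf Sδ := rfl
  have hroeq : roConst F (2*m) (3*m) = sInf Sθ := rfl
  -- operator norm bound
  set K2 := ∑ x, ∑ y, (F x y)^2 with hK2
  have hK2nn : 0 ≤ K2 := Finset.sum_nonneg fun x _ =>
    Finset.sum_nonneg fun y _ => sq_nonneg _
  have hop : ∀ c : Fin p → ℝ, (∑ x, (F.mulVec c x)^2) ≤ K2 * (∑ y, c y^2) := by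
    intro c
    have h1 : ∀ x, (F.mulVec c x)^2 ≤ (∑ y, (F x y)^2) * (∑ y, c y^2) := by
      intro x
      have := Finset.sum_mul_sq_le_sq_mul_sq Finset.univ (fun y => F x y) c
      simpa [Matrix.mulVec, dotProduct] using this
    calc (∑ x, (F.mulVec c x)^2) ≤ ∑ x, (∑ y, (F x y)^2) * (∑ y, c y^2) :=
          Finset.sum_le_sum fun x _ => h1 x
      _ = K2 * (∑ y, c y^2) := by rw [hK2, Finset.sum_mul]
  have hopn : ∀ c : Fin p → ℝ, l2norm (F.mulVec c) ≤ Real.sqrt K2 * l2norm c := by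
    intro c
    have h2 : Real.sqrt (∑ x, (F.mulVec c x)^2) ≤ Real.sqrt (K2 * (∑ y, c y^2)) :=
      Real.sqrt_le_sqrt (hop c)
    calc l2norm (F.mulVec c) = Real.sqrt (∑ x, (F.mulVec c x)^2) := rfl
      _ ≤ Real.sqrt (K2 * (∑ y, c y^2)) := h2
      _ = Real.sqrt K2 * l2norm c := Real.sqrt_mul hK2nn _
  -- nonemptiness
  have hSδne : Sδ.Nonempty := by
    refine ⟨1 + K2, fun c _ => ⟨?_, ?_⟩⟩
    · rw [show (1:ℝ) - (1 + K2) = -K2 from by ring, Real.sqrt_eq_zero_of_nonpos (by linarith),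
        zero_mul]
      exact Real.sqrt_nonneg _
    · calc l2norm (F.mulVec c) ≤ Real.sqrt K2 * l2norm c := hopn c
        _ ≤ Real.sqrt (1 + (1 + K2)) * l2norm c := by
            apply mul_le_mul_of_nonneg_right (Real.sqrt_le_sqrt (by linarith))
              (Real.sqrt_nonneg _)
  have hSθne : Sθ.Nonempty := by
    refine ⟨K2, fun c c' _ _ _ => ?_⟩
    have h1 : |∑ i, F.mulVec c i * F.mulVec c' i|
        ≤ l2norm (F.mulVec c) * l2norm (F.mulVec c') := by
      have h2 := Finset.sum_mul_sq_le_sq_mul_sq Finset.univ (F.mulVec c) (F.mulVec c')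
      have h3 : |∑ i, F.mulVec c i * F.mulVec c' i|
          = Real.sqrt ((∑ i, F.mulVec c i * F.mulVec c' i)^2) := (Real.sqrt_sq_eq_abs _).symm
      rw [h3]
      calc Real.sqrt ((∑ i, F.mulVec c i * F.mulVec c' i)^2)
          ≤ Real.sqrt ((∑ i, (F.mulVec c i)^2) * (∑ i, (F.mulVec c' i)^2)) :=
            Real.sqrt_le_sqrt h2
        _ = l2norm (F.mulVec c) * l2norm (F.mulVec c') :=
            Real.sqrt_mul (Finset.sum_nonneg fun x _ => sq_nonneg _) _
    calc |∑ i, F.mulVec c i * F.mulVec c' i|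
        ≤ l2norm (F.mulVec c) * l2norm (F.mulVec c') := h1
      _ ≤ (Real.sqrt K2 * l2norm c) * (Real.sqrt K2 * l2norm c') := by
          apply mul_le_mul (hopn c) (hopn c') (hl2nn _ _)
          exact mul_nonneg (Real.sqrt_nonneg _) (hl2nn _ _)
      _ = K2 * (l2norm c * l2norm c') := by
          rw [show (Real.sqrt K2 * l2norm c) * (Real.sqrt K2 * l2norm c')
            = (Real.sqrt K2 * Real.sqrt K2) * (l2norm c * l2norm c') from by ring,
            Real.mul_self_sqrt hK2nn]
  -- unit vectors and nonnegativity of the constants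
  have hp0 : 0 < p := by omega
  have hp1 : 1 < p := by omega
  have hunit : ∀ x₀ : Fin p, l2norm (fun x => if x = x₀ then (1:ℝ) else 0) = 1 := by
    intro x₀
    have : (∑ x, (if x = x₀ then (1:ℝ) else 0)^2) = 1 := by
      rw [Finset.sum_congr rfl (fun x _ => by
        show (if x = x₀ then (1:ℝ) else 0)^2 = if x = x₀ then (1:ℝ) else 0
        split <;> norm_num)]
      simp
    show Real.sqrt _ = 1
    rw [this, Real.sqrt_one]
  have hunitsp : ∀ (x₀ : Fin p) (k : ℕ), 1 ≤ k →
      IsSparse k (fun x => if x = x₀ then (1:ℝ) else 0) := by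
    intro x₀ k hk
    exact ⟨{x₀}, by simpa using hk, fun x hx => by
      simp only [Finset.mem_singleton] at hx
      simp [hx]⟩
  have hδnn : ∀ d ∈ Sδ, 0 ≤ d := by
    intro d hd
    by_contra hneg
    push_neg at hneg
    obtain ⟨h1, h2⟩ := hd (fun x => if x = (⟨0, hp0⟩ : Fin p) then (1:ℝ) else 0)
      (hunitsp _ (3*m) (by omega))
    rw [hunit] at h1 h2
    rw [mul_one] at h1 h2
    have h3 : Real.sqrt (1 - d) ≤ Real.sqrt (1 + d) := le_trans h1 h2
    have hlt : Real.sqrt (1 + d) < Real.sqrt (1 - d) := by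
      rcases le_or_gt 0 (1 + d) with h4 | h4
      · exact Real.sqrt_lt_sqrt h4 (by linarith)
      · rw [Real.sqrt_eq_zero_of_nonpos h4.le]
        have h5 : Real.sqrt 1 ≤ Real.sqrt (1 - d) := Real.sqrt_le_sqrt (by linarith)
        rw [Real.sqrt_one] at h5
        linarith
    linarith
  have hθnn : ∀ t ∈ Sθ, 0 ≤ t := by
    intro t ht
    have h1 := ht (fun x => if x = (⟨0, hp0⟩ : Fin p) then (1:ℝ) else 0)
      (fun x => if x = (⟨1, hp1⟩ : Fin p) then (1:ℝ) else 0)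
      (hunitsp _ (2*m) (by omega)) (hunitsp _ (3*m) (by omega))
      (by
        intro x
        by_cases hx : x = (⟨0, hp0⟩ : Fin p)
        · right
          show (if x = (⟨1, hp1⟩ : Fin p) then (1:ℝ) else 0) = 0
          rw [if_neg]
          rw [hx]
          intro hc
          exact absurd (congrArg Fin.val hc) (by norm_num)
        · left
          show (if x = (⟨0, hp0⟩ : Fin p) then (1:ℝ) else 0) = 0
          rw [if_neg hx])
    rw [hunit, hunit, mul_one, mul_one] at h1
    exact le_trans (abs_nonneg _) h1
  have hripnn : 0 ≤ ripConst F (3*m) := hripeq ▸ Real.sInf_nonneg hδnn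
  have hronn : 0 ≤ roConst F (2*m) (3*m) := hroeq ▸ Real.sInf_nonneg hθnn
  -- pick near-infimal constants
  set ε := (1 - ripConst F (3*m) - roConst F (2*m) (3*m))/2 with hε
  have hεpos : 0 < ε := by
    rw [hε]
    have : ripConst F (3 * m) + roConst F (2 * m) (3 * m) < 1 := hcond
    linarith
  obtain ⟨δ', hδ'mem, hδ'lt⟩ := Real.lt_sInf_add_pos hSδne hεpos
  obtain ⟨θ', hθ'mem, hθ'lt⟩ := Real.lt_sInf_add_pos hSθne hεpos
  rw [← hripeq] at hδ'lt
  rw [← hroeq] at hθ'lt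
  obtain ⟨θ'', hθ''mem, hθ''0, hθ''lt⟩ :
      ∃ t ∈ Sθ, 0 ≤ t ∧ t < roConst F (2*m) (3*m) + ε := by
    rcases le_or_gt 0 θ' with h0 | h0
    · exact ⟨θ', hθ'mem, h0, hθ'lt⟩
    · refine ⟨0, ?_, le_refl 0, by linarith⟩
      intro c c' hc hc' hdis
      have h1 := hθ'mem c c' hc hc' hdis
      have h2 : θ' * (l2norm c * l2norm c') ≤ 0 :=
        mul_nonpos_of_nonpos_of_nonneg h0.le (mul_nonneg (hl2nn _ _) (hl2nn _ _))
      rw [zero_mul]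
      linarith
  have hsum' : δ' + θ'' < 1 := by
    have := hδ'lt
    have := hθ''lt
    rw [hε] at *
    linarith
  -- apply the null space property
  obtain ⟨T₀, hT₀card, hT₀z⟩ := hβ
  set h := γ - β with hhdef
  have hker : F.mulVec h = 0 := by
    rw [hhdef, Matrix.mulVec_sub, hγ, hy, sub_self]
  have hne0 : h ≠ 0 := by
    rw [hhdef]
    intro hc
    exact hγβ (sub_eq_zero.1 hc)
  have hlt : ∑ x ∈ T₀, |h x| < ∑ x ∈ T₀ᶜ, |h x| := by
    by_contra hcon
    push_neg at hcon
    exact hne0 (nsp F hm δ' θ'' hδ'mem hθ''mem hθ''0 hsum' h hker T₀ hT₀card hcon)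
  -- conclude the ℓ1 comparison
  have hγeq : ∀ x, γ x = β x + h x := by
    intro x
    rw [hhdef]
    simp
  have h2 : ∀ x ∈ T₀ᶜ, |γ x| = |h x| := by
    intro x hx
    rw [hγeq x, hT₀z x (Finset.mem_compl.1 hx), zero_add]
  have h3 : ∀ x ∈ T₀, |β x| - |h x| ≤ |γ x| := by
    intro x _
    have : |β x| = |γ x - h x| := by rw [hγeq x]; ring_nf
    rw [this]
    have := abs_sub (γ x) (h x)
    linarith
  have h4 : l1norm β = ∑ x ∈ T₀, |β x| := by
    rw [l1norm, ← Finset.sum_add_sum_compl T₀ (fun x => |β x|)]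
    have : ∑ x ∈ T₀ᶜ, |β x| = 0 :=
      Finset.sum_eq_zero fun x hx => by rw [hT₀z x (Finset.mem_compl.1 hx), abs_zero]
    rw [this, add_zero]
  have h5 : l1norm γ = (∑ x ∈ T₀, |γ x|) + ∑ x ∈ T₀ᶜ, |h x| := by
    rw [l1norm, ← Finset.sum_add_sum_compl T₀ (fun x => |γ x|)]
    rw [Finset.sum_congr rfl h2]
  have h6 : (∑ x ∈ T₀, |β x|) - (∑ x ∈ T₀, |h x|) ≤ ∑ x ∈ T₀, |γ x| := by
    rw [← Finset.sum_sub_distrib]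
    exact Finset.sum_le_sum h3
  rw [h4, h5]
  linarith
end

section
/- Let F be a real n×p matrix and let k ≥ 1 be an even integer with 2.5k ≤ p satisfying δ_{1.75k} < √2 − 1 (with 1.75k an integer). Then δ_{1.5k} + θ_{k,1.5k} < 1. -/
namespace RIPaux
open Finset

variable {n p : ℕ}

lemma l2_sq (v : Fin p → ℝ) : l2norm v ^ 2 = ∑ i, v i ^ 2 := by
  rw [l2norm, Real.sq_sqrt (by positivity)]

lemma l2_nonneg (v : Fin p → ℝ) : 0 ≤ l2norm v := Real.sqrt_nonneg _

lemma eq_zero_of_sum_sq {v : Fin p → ℝ} (h : ∑ i, v i ^ 2 = 0) : ∀ i, v i = 0 := by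
  intro i
  have := (Finset.sum_eq_zero_iff_of_nonneg (fun j _ => sq_nonneg (v j))).mp h i (mem_univ i)
  exact sq_eq_zero_iff.mp this

lemma sparse_mono {k k' : ℕ} (h : k ≤ k') {v : Fin p → ℝ} (hv : IsSparse k v) :
    IsSparse k' v := by
  obtain ⟨s, hs, h0⟩ := hv; exact ⟨s, hs.trans h, h0⟩

lemma sparse_add {k k' : ℕ} {x y : Fin p → ℝ} (hx : IsSparse k x) (hy : IsSparse k' y) :
    IsSparse (k + k') (fun i => x i + y i) := by
  obtain ⟨s, hs, hs0⟩ := hx; obtain ⟨t, ht, ht0⟩ := hy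
  refine ⟨s ∪ t, le_trans (card_union_le s t) (Nat.add_le_add hs ht), fun i hi => ?_⟩
  simp only [mem_union, not_or] at hi
  simp [hs0 i hi.1, ht0 i hi.2]

lemma sparse_scale {k : ℕ} {x : Fin p → ℝ} (a : ℝ) (hx : IsSparse k x) :
    IsSparse k (fun i => a * x i) := by
  obtain ⟨s, hs, hs0⟩ := hx
  exact ⟨s, hs, fun i hi => by show a * x i = 0; rw [hs0 i hi, mul_zero]⟩

lemma mulVec_add' (F : Matrix (Fin n) (Fin p) ℝ) (x y : Fin p → ℝ) (i : Fin n) :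
    F.mulVec (fun j => x j + y j) i = F.mulVec x i + F.mulVec y i := by
  simp [Matrix.mulVec, dotProduct, mul_add, Finset.sum_add_distrib]

lemma mulVec_smul' (F : Matrix (Fin n) (Fin p) ℝ) (a : ℝ) (x : Fin p → ℝ) (i : Fin n) :
    F.mulVec (fun j => a * x j) i = a * F.mulVec x i := by
  simp [Matrix.mulVec, dotProduct, Finset.mul_sum, mul_comm, mul_left_comm]


def RipSet (F : Matrix (Fin n) (Fin p) ℝ) (k : ℕ) : Set ℝ :=
  {δ : ℝ | ∀ c : Fin p → ℝ, IsSparse k c →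
    Real.sqrt (1 - δ) * l2norm c ≤ l2norm (F.mulVec c) ∧
    l2norm (F.mulVec c) ≤ Real.sqrt (1 + δ) * l2norm c}

/-- unit basis vector -/
def unitvec (hp : 0 < p) (t : Fin p) : Fin p → ℝ := fun i => if i = t then 1 else 0

lemma unitvec_sparse (hp : 0 < p) (t : Fin p) {k : ℕ} (hk : 1 ≤ k) :
    IsSparse k (unitvec hp t) := by
  refine ⟨{t}, by simpa using hk, fun i hi => ?_⟩
  simp only [mem_singleton] at hi
  simp [unitvec, hi]

lemma unitvec_l2 (hp : 0 < p) (t : Fin p) : l2norm (unitvec hp t) = 1 := by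
  have : ∑ i, (unitvec hp t i) ^ 2 = 1 := by
    simp [unitvec, apply_ite (· ^ 2), Finset.sum_ite_eq']
  rw [l2norm, this, Real.sqrt_one]

lemma ripset_nonneg {F : Matrix (Fin n) (Fin p) ℝ} {k : ℕ} (hp : 0 < p) (hk : 1 ≤ k)
    {δ : ℝ} (hδ : δ ∈ RipSet F k) : 0 ≤ δ := by
  obtain ⟨h1, h2⟩ := hδ (unitvec hp ⟨0, hp⟩) (unitvec_sparse hp _ hk)
  rw [unitvec_l2] at h1 h2
  by_contra hneg
  push_neg at hneg
  have hle : Real.sqrt (1 - δ) ≤ Real.sqrt (1 + δ) := by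
    calc Real.sqrt (1 - δ) = Real.sqrt (1 - δ) * 1 := (mul_one _).symm
    _ ≤ l2norm (F.mulVec (unitvec hp ⟨0, hp⟩)) := h1
    _ ≤ Real.sqrt (1 + δ) * 1 := h2
    _ = Real.sqrt (1 + δ) := mul_one _
  rcases le_or_gt 0 (1 + δ) with hpos | hneg2
  · have := (Real.sqrt_le_sqrt_iff hpos).mp hle; linarith
  · have h0 : Real.sqrt (1 + δ) = 0 := Real.sqrt_eq_zero_of_nonpos hneg2.le
    have hposs : 0 < Real.sqrt (1 - δ) := Real.sqrt_pos.mpr (by linarith)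
    linarith

lemma ripset_nonempty (F : Matrix (Fin n) (Fin p) ℝ) (k : ℕ) : (RipSet F k).Nonempty := by
  refine ⟨1 + ∑ i, ∑ j, (F i j) ^ 2, fun c _ => ?_⟩
  have hC : (0:ℝ) ≤ ∑ i, ∑ j, (F i j) ^ 2 := by positivity
  constructor
  · have : Real.sqrt (1 - (1 + ∑ i, ∑ j, (F i j) ^ 2)) = 0 :=
      Real.sqrt_eq_zero_of_nonpos (by linarith)
    rw [this, zero_mul]
    exact Real.sqrt_nonneg _
  · have hrow : ∀ i, (F.mulVec c i) ^ 2 ≤ (∑ j, (F i j) ^ 2) * (∑ j, c j ^ 2) := by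
      intro i
      have := Finset.sum_mul_sq_le_sq_mul_sq Finset.univ (fun j => F i j) c
      simpa [Matrix.mulVec, dotProduct] using this
    have hsum : ∑ i, (F.mulVec c i) ^ 2 ≤ (∑ i, ∑ j, (F i j) ^ 2) * (∑ j, c j ^ 2) := by
      rw [Finset.sum_mul]
      exact Finset.sum_le_sum fun i _ => hrow i
    have hcs : (0:ℝ) ≤ ∑ j, c j ^ 2 := by positivity
    have h2 : ∑ i, (F.mulVec c i) ^ 2 ≤ (1 + (1 + ∑ i, ∑ j, (F i j) ^ 2)) * (∑ j, c j ^ 2) := by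
      nlinarith
    calc l2norm (F.mulVec c) = Real.sqrt (∑ i, (F.mulVec c i) ^ 2) := rfl
      _ ≤ Real.sqrt ((1 + (1 + ∑ i, ∑ j, (F i j) ^ 2)) * (∑ j, c j ^ 2)) := Real.sqrt_le_sqrt h2
      _ = Real.sqrt (1 + (1 + ∑ i, ∑ j, (F i j) ^ 2)) * l2norm c := by
          rw [l2norm, Real.sqrt_mul (by linarith)]

lemma ripset_bddBelow {F : Matrix (Fin n) (Fin p) ℝ} {k : ℕ} (hp : 0 < p) (hk : 1 ≤ k) :
    BddBelow (RipSet F k) := ⟨0, fun δ hδ => ripset_nonneg hp hk hδ⟩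

/-- squared RIP at the infimum -/
lemma rip2_inf {F : Matrix (Fin n) (Fin p) ℝ} {k : ℕ} (hp : 0 < p) (hk : 1 ≤ k)
    {c : Fin p → ℝ} (hc : IsSparse k c) :
    (1 - sInf (RipSet F k)) * (∑ i, c i ^ 2) ≤ ∑ i, (F.mulVec c i) ^ 2 ∧
    ∑ i, (F.mulVec c i) ^ 2 ≤ (1 + sInf (RipSet F k)) * (∑ i, c i ^ 2) := by
  set δ₀ := sInf (RipSet F k) with hδ₀
  have hne := ripset_nonempty F k
  have key : ∀ ε > (0:ℝ),
      (1 - δ₀ - ε) * (∑ i, c i ^ 2) ≤ ∑ i, (F.mulVec c i) ^ 2 ∧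
      ∑ i, (F.mulVec c i) ^ 2 ≤ (1 + δ₀ + ε) * (∑ i, c i ^ 2) := by
    intro ε hε
    obtain ⟨δ, hδS, hδlt⟩ := exists_lt_of_csInf_lt hne (lt_add_of_pos_right δ₀ hε)
    have hδ0 : 0 ≤ δ := ripset_nonneg hp hk hδS
    obtain ⟨h1, h2⟩ := hδS c hc
    have hl2c : l2norm c ^ 2 = ∑ i, c i ^ 2 := l2_sq c
    have hl2F : l2norm (F.mulVec c) ^ 2 = ∑ i, (F.mulVec c i) ^ 2 := l2_sq _
    constructor
    · have hsq : (Real.sqrt (1 - δ) * l2norm c) ^ 2 ≤ l2norm (F.mulVec c) ^ 2 := by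
        have := mul_self_le_mul_self (mul_nonneg (Real.sqrt_nonneg _) (l2_nonneg _)) h1
        simpa [pow_two] using this
      have hs1 : 1 - δ ≤ Real.sqrt (1 - δ) ^ 2 := by
        rcases le_or_gt 0 (1 - δ) with hh | hh
        · rw [Real.sq_sqrt hh]
        · nlinarith [Real.sqrt_nonneg (1 - δ), sq_nonneg (Real.sqrt (1 - δ))]
      have hcs : (0:ℝ) ≤ ∑ i, c i ^ 2 := by positivity
      nlinarith [hsq, hl2c, hl2F]
    · have hsq : l2norm (F.mulVec c) ^ 2 ≤ (Real.sqrt (1 + δ) * l2norm c) ^ 2 := by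
        have := mul_self_le_mul_self (l2_nonneg _) h2
        simpa [pow_two] using this
      have hs1 : Real.sqrt (1 + δ) ^ 2 = 1 + δ := Real.sq_sqrt (by linarith)
      have hcs : (0:ℝ) ≤ ∑ i, c i ^ 2 := by positivity
      nlinarith [hsq, hl2c, hl2F]
  have hcs : (0:ℝ) ≤ ∑ i, c i ^ 2 := by positivity
  constructor
  · apply le_of_forall_pos_le_add
    intro ε hε
    have hε' : (0:ℝ) < ε / ((∑ i, c i ^ 2) + 1) := by positivity
    have := (key _ hε').1
    have hb : (ε / ((∑ i, c i ^ 2) + 1)) * (∑ i, c i ^ 2) ≤ ε := by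
      rw [div_mul_eq_mul_div, div_le_iff₀ (by positivity)]
      nlinarith
    nlinarith
  · apply le_of_forall_pos_le_add
    intro ε hε
    have hε' : (0:ℝ) < ε / ((∑ i, c i ^ 2) + 1) := by positivity
    have := (key _ hε').2
    have hb : (ε / ((∑ i, c i ^ 2) + 1)) * (∑ i, c i ^ 2) ≤ ε := by
      rw [div_mul_eq_mul_div, div_le_iff₀ (by positivity)]
      nlinarith
    nlinarith

end RIPaux

namespace RIPaux2
open Finset RIPaux

variable {n p : ℕ}

lemma sparse_sub {k k' : ℕ} {x y : Fin p → ℝ} (hx : IsSparse k x) (hy : IsSparse k' y) :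
    IsSparse (k + k') (fun i => x i - y i) := by
  obtain ⟨s, hs, hs0⟩ := hx; obtain ⟨t, ht, ht0⟩ := hy
  refine ⟨s ∪ t, le_trans (card_union_le s t) (Nat.add_le_add hs ht), fun i hi => ?_⟩
  simp only [mem_union, not_or] at hi
  show x i - y i = 0
  rw [hs0 i hi.1, ht0 i hi.2, sub_zero]

lemma mulVec_sub' (F : Matrix (Fin n) (Fin p) ℝ) (x y : Fin p → ℝ) (i : Fin n) :
    F.mulVec (fun j => x j - y j) i = F.mulVec x i - F.mulVec y i := by
  simp [Matrix.mulVec, dotProduct, mul_sub, Finset.sum_sub_distrib]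

lemma sum_sq_mulVec_add (F : Matrix (Fin n) (Fin p) ℝ) (x y : Fin p → ℝ) :
    ∑ i, (F.mulVec (fun j => x j + y j) i) ^ 2 =
      ∑ i, (F.mulVec x i) ^ 2 + 2 * (∑ i, F.mulVec x i * F.mulVec y i)
        + ∑ i, (F.mulVec y i) ^ 2 := by
  calc ∑ i, (F.mulVec (fun j => x j + y j) i) ^ 2
      = ∑ i, ((F.mulVec x i) ^ 2 + 2 * (F.mulVec x i * F.mulVec y i) + (F.mulVec y i) ^ 2) := by
        refine Finset.sum_congr rfl fun i _ => ?_
        rw [mulVec_add']; ring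
    _ = _ := by rw [Finset.sum_add_distrib, Finset.sum_add_distrib, Finset.mul_sum]

lemma sum_sq_mulVec_sub (F : Matrix (Fin n) (Fin p) ℝ) (x y : Fin p → ℝ) :
    ∑ i, (F.mulVec (fun j => x j - y j) i) ^ 2 =
      ∑ i, (F.mulVec x i) ^ 2 - 2 * (∑ i, F.mulVec x i * F.mulVec y i)
        + ∑ i, (F.mulVec y i) ^ 2 := by
  calc ∑ i, (F.mulVec (fun j => x j - y j) i) ^ 2
      = ∑ i, ((F.mulVec x i) ^ 2 - 2 * (F.mulVec x i * F.mulVec y i) + (F.mulVec y i) ^ 2) := by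
        refine Finset.sum_congr rfl fun i _ => ?_
        rw [mulVec_sub']; ring
    _ = ∑ i, ((F.mulVec x i) ^ 2 - 2 * (F.mulVec x i * F.mulVec y i))
          + ∑ i, (F.mulVec y i) ^ 2 := Finset.sum_add_distrib
    _ = _ := by rw [Finset.sum_sub_distrib, Finset.mul_sum]

/-- polarization bound at the infimum -/
lemma polar (F : Matrix (Fin n) (Fin p) ℝ) (hp : 0 < p) {a b : ℕ} (hab : 1 ≤ a + b)
    {x y : Fin p → ℝ} (hx : IsSparse a x) (hy : IsSparse b y)
    (hdisj : ∀ i, x i = 0 ∨ y i = 0) :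
    |∑ i, F.mulVec x i * F.mulVec y i| ≤
      sInf (RipSet F (a + b)) * (l2norm x * l2norm y) := by
  set δ₀ := sInf (RipSet F (a + b)) with hδ₀def
  have hδ₀ : 0 ≤ δ₀ := le_csInf (ripset_nonempty F _) fun δ hδ => ripset_nonneg hp hab hδ
  by_cases hx0 : ∑ i, x i ^ 2 = 0
  · have hxz := eq_zero_of_sum_sq hx0
    have : ∑ i, F.mulVec x i * F.mulVec y i = 0 := by
      refine Finset.sum_eq_zero fun i _ => ?_
      have : F.mulVec x i = 0 := by
        simp [Matrix.mulVec, dotProduct, hxz]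
      rw [this, zero_mul]
    rw [this, abs_zero]
    exact mul_nonneg hδ₀ (mul_nonneg (l2_nonneg _) (l2_nonneg _))
  by_cases hy0 : ∑ i, y i ^ 2 = 0
  · have hyz := eq_zero_of_sum_sq hy0
    have : ∑ i, F.mulVec x i * F.mulVec y i = 0 := by
      refine Finset.sum_eq_zero fun i _ => ?_
      have : F.mulVec y i = 0 := by
        simp [Matrix.mulVec, dotProduct, hyz]
      rw [this, mul_zero]
    rw [this, abs_zero]
    exact mul_nonneg hδ₀ (mul_nonneg (l2_nonneg _) (l2_nonneg _))
  -- nondegenerate case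
  set X := l2norm x with hXdef
  set Y := l2norm y with hYdef
  have hA : X ^ 2 = ∑ i, x i ^ 2 := l2_sq x
  have hB : Y ^ 2 = ∑ i, y i ^ 2 := l2_sq y
  have hXpos : 0 < X := Real.sqrt_pos.mpr (lt_of_le_of_ne (by positivity) (Ne.symm hx0))
  have hYpos : 0 < Y := Real.sqrt_pos.mpr (lt_of_le_of_ne (by positivity) (Ne.symm hy0))
  set u := fun j => Y * x j with hudef
  set v := fun j => X * y j with hvdef
  have hu : IsSparse a u := sparse_scale Y hx
  have hv : IsSparse b v := sparse_scale X hy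
  have hupv : IsSparse (a + b) (fun j => u j + v j) := sparse_add hu hv
  have humv : IsSparse (a + b) (fun j => u j - v j) := sparse_sub hu hv
  -- norms of u ± v
  have hdisj' : ∀ i, u i = 0 ∨ v i = 0 := by
    intro i; rcases hdisj i with h | h
    · left; show Y * x i = 0; rw [h, mul_zero]
    · right; show X * y i = 0; rw [h, mul_zero]
  have hsum_uv : ∑ i, (u i + v i) ^ 2 = 2 * (X ^ 2 * Y ^ 2) := by
    have : ∀ i, (u i + v i) ^ 2 = Y ^ 2 * x i ^ 2 + X ^ 2 * y i ^ 2 := by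
      intro i
      rcases hdisj i with h | h <;>
        · show (Y * x i + X * y i) ^ 2 = _
          rw [h]; ring
    rw [Finset.sum_congr rfl fun i _ => this i, Finset.sum_add_distrib,
      ← Finset.mul_sum, ← Finset.mul_sum, ← hA, ← hB]
    ring
  have hsum_umv : ∑ i, (u i - v i) ^ 2 = 2 * (X ^ 2 * Y ^ 2) := by
    have : ∀ i, (u i - v i) ^ 2 = Y ^ 2 * x i ^ 2 + X ^ 2 * y i ^ 2 := by
      intro i
      rcases hdisj i with h | h <;>
        · show (Y * x i - X * y i) ^ 2 = _
          rw [h]; ring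
    rw [Finset.sum_congr rfl fun i _ => this i, Finset.sum_add_distrib,
      ← Finset.mul_sum, ← Finset.mul_sum, ← hA, ← hB]
    ring
  obtain ⟨hP1, hP2⟩ := rip2_inf hp hab hupv
  obtain ⟨hM1, hM2⟩ := rip2_inf hp hab humv
  rw [hsum_uv] at hP1 hP2
  rw [hsum_umv] at hM1 hM2
  rw [sum_sq_mulVec_add] at hP1 hP2
  rw [sum_sq_mulVec_sub] at hM1 hM2
  -- inner product of u, v in terms of x, y
  have hipuv : ∑ i, F.mulVec u i * F.mulVec v i =
      X * Y * ∑ i, F.mulVec x i * F.mulVec y i := by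
    rw [Finset.mul_sum]
    refine Finset.sum_congr rfl fun i _ => ?_
    rw [hudef, hvdef, mulVec_smul', mulVec_smul']
    ring
  rw [hipuv] at hP1 hP2 hM1 hM2
  set I := ∑ i, F.mulVec x i * F.mulVec y i
  rw [abs_le]
  constructor
  · nlinarith [mul_pos hXpos hYpos]
  · nlinarith [mul_pos hXpos hYpos]

end RIPaux2

namespace RIPaux3
open Finset RIPaux RIPaux2

variable {n p : ℕ}

lemma sparse_split {k : ℕ} {v : Fin p → ℝ} (hv : IsSparse (2 * k) v) :
    ∃ a b : Fin p → ℝ, (∀ i, v i = a i + b i) ∧ IsSparse k a ∧ IsSparse k b ∧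
      (∀ i, a i = 0 ∨ b i = 0) ∧ (∀ i, v i = 0 → a i = 0 ∧ b i = 0) := by
  obtain ⟨s, hs, hs0⟩ := hv
  obtain ⟨t, hts, htc⟩ := Finset.exists_subset_card_eq (min_le_left s.card k)
  refine ⟨fun i => if i ∈ t then v i else 0, fun i => if i ∈ t then 0 else v i,
    fun i => by by_cases h : i ∈ t <;> simp [h], ?_, ?_, fun i => ?_, fun i hi => ?_⟩
  · refine ⟨t, by omega, fun i hi => by simp [hi]⟩
  · refine ⟨s \ t, ?_, fun i hi => ?_⟩
    · rw [Finset.card_sdiff_of_subset hts, htc]; omega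
    · simp only [mem_sdiff, not_and, not_not] at hi
      by_cases h : i ∈ t
      · simp [h]
      · simp only [h, if_neg, if_false]
        by_cases h2 : i ∈ s
        · exact absurd (hi h2) h
        · exact hs0 i h2
  · by_cases h : i ∈ t <;> simp [h]
  · by_cases h : i ∈ t <;> simp [h, hi]

/-- `√2·δ₀` is an admissible restricted-orthogonality bound. -/
lemma theta_mem (F : Matrix (Fin n) (Fin p) ℝ) {m : ℕ} (hm : 1 ≤ m) (hp : 0 < p)
    {c c' : Fin p → ℝ} (hc : IsSparse (4 * m) c) (hc' : IsSparse (6 * m) c')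
    (hdisj : ∀ i, c i = 0 ∨ c' i = 0) :
    |∑ i, F.mulVec c i * F.mulVec c' i| ≤
      Real.sqrt 2 * sInf (RipSet F (7 * m)) * (l2norm c * l2norm c') := by
  set δ₀ := sInf (RipSet F (7 * m)) with hδ₀def
  have h7 : 1 ≤ 7 * m := by omega
  have hδ₀ : 0 ≤ δ₀ := le_csInf (ripset_nonempty F _) fun δ hδ => ripset_nonneg hp h7 hδ
  have hc'' : IsSparse (2 * (3 * m)) c' := by
    have : 2 * (3 * m) = 6 * m := by ring
    rw [this]; exact hc'
  obtain ⟨a, b, hab, ha, hb, habd, hz⟩ := sparse_split hc''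
  -- split the inner product
  have hsplit : ∑ i, F.mulVec c i * F.mulVec c' i =
      (∑ i, F.mulVec c i * F.mulVec a i) + (∑ i, F.mulVec c i * F.mulVec b i) := by
    rw [← Finset.sum_add_distrib]
    refine Finset.sum_congr rfl fun i _ => ?_
    have hc'eq : c' = fun j => a j + b j := funext fun j => hab j
    rw [hc'eq, mulVec_add']; ring
  have hda : ∀ i, c i = 0 ∨ a i = 0 := fun i => (hdisj i).imp id fun h => (hz i h).1
  have hdb : ∀ i, c i = 0 ∨ b i = 0 := fun i => (hdisj i).imp id fun h => (hz i h).2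
  have h43 : (4 * m) + (3 * m) = 7 * m := by ring
  have hpa : |∑ i, F.mulVec c i * F.mulVec a i| ≤ δ₀ * (l2norm c * l2norm a) := by
    have := polar F hp (a := 4 * m) (b := 3 * m) (by omega) hc ha hda
    rwa [h43] at this
  have hpb : |∑ i, F.mulVec c i * F.mulVec b i| ≤ δ₀ * (l2norm c * l2norm b) := by
    have := polar F hp (a := 4 * m) (b := 3 * m) (by omega) hc hb hdb
    rwa [h43] at this
  -- ‖a‖ + ‖b‖ ≤ √2 ‖c'‖
  have hsq : (∑ i, a i ^ 2) + (∑ i, b i ^ 2) = ∑ i, c' i ^ 2 := by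
    rw [← Finset.sum_add_distrib]
    refine Finset.sum_congr rfl fun i _ => ?_
    rcases habd i with h | h <;> rw [hab i, h] <;> ring
  have hA := l2_sq a; have hB := l2_sq b; have hC := l2_sq c'
  have hna := l2_nonneg a; have hnb := l2_nonneg b; have hnc' := l2_nonneg c'
  have hnc := l2_nonneg c
  have hab2 : l2norm a + l2norm b ≤ Real.sqrt 2 * l2norm c' := by
    nlinarith [Real.sq_sqrt (by norm_num : (0:ℝ) ≤ 2), Real.sqrt_nonneg 2,
      sq_nonneg (l2norm a - l2norm b), sq_nonneg (Real.sqrt 2 * l2norm c' - (l2norm a + l2norm b)),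
      mul_nonneg (Real.sqrt_nonneg 2) hnc']
  calc |∑ i, F.mulVec c i * F.mulVec c' i|
      ≤ |∑ i, F.mulVec c i * F.mulVec a i| + |∑ i, F.mulVec c i * F.mulVec b i| := by
        rw [hsplit]; exact abs_add_le _ _
    _ ≤ δ₀ * (l2norm c * l2norm a) + δ₀ * (l2norm c * l2norm b) := add_le_add hpa hpb
    _ = δ₀ * l2norm c * (l2norm a + l2norm b) := by ring
    _ ≤ δ₀ * l2norm c * (Real.sqrt 2 * l2norm c') := by
        exact mul_le_mul_of_nonneg_left hab2 (mul_nonneg hδ₀ hnc)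
    _ = Real.sqrt 2 * δ₀ * (l2norm c * l2norm c') := by ring

end RIPaux3

namespace RIPaux4
open Finset RIPaux RIPaux2 RIPaux3

variable {n p : ℕ}

def ThetaSet (F : Matrix (Fin n) (Fin p) ℝ) (k k' : ℕ) : Set ℝ :=
  {θ : ℝ | ∀ c c' : Fin p → ℝ, IsSparse k c → IsSparse k' c' →
    (∀ i, c i = 0 ∨ c' i = 0) →
    |∑ i, F.mulVec c i * F.mulVec c' i| ≤ θ * (l2norm c * l2norm c')}

lemma thetaset_nonneg {F : Matrix (Fin n) (Fin p) ℝ} {k k' : ℕ} (hp : 2 ≤ p)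
    (hk : 1 ≤ k) (hk' : 1 ≤ k') {θ : ℝ} (hθ : θ ∈ ThetaSet F k k') : 0 ≤ θ := by
  have hp0 : 0 < p := by omega
  have hne : (⟨0, hp0⟩ : Fin p) ≠ ⟨1, by omega⟩ := by
    intro h; simpa using congrArg Fin.val h
  have hd : ∀ i, unitvec hp0 ⟨0, hp0⟩ i = 0 ∨ unitvec hp0 ⟨1, by omega⟩ i = 0 := by
    intro i
    by_cases h : i = ⟨0, hp0⟩
    · right; simp [unitvec, h, hne]
    · left; simp [unitvec, h]
  have := hθ _ _ (unitvec_sparse hp0 _ hk) (unitvec_sparse hp0 _ hk') hd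
  rw [unitvec_l2, unitvec_l2] at this
  calc (0:ℝ) ≤ |∑ i, F.mulVec (unitvec hp0 ⟨0, hp0⟩) i *
      F.mulVec (unitvec hp0 ⟨1, by omega⟩) i| := abs_nonneg _
    _ ≤ θ * (1 * 1) := this
    _ = θ := by ring

end RIPaux4


open RIPaux RIPaux2 RIPaux3 RIPaux4 in
/-- With `k = 4*m` (so that `1.75k = 7m` is an integer and `k` is even),
`δ_{1.75k} < √2 - 1` implies `δ_{1.5k} + θ_{k,1.5k} < 1`. -/
theorem rip_seventyfive_implies_cond {n p m : ℕ} (F : Matrix (Fin n) (Fin p) ℝ)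
    (hm : 1 ≤ m) (hp : 10 * m ≤ p)
    (h : ripConst F (7 * m) < Real.sqrt 2 - 1) :
    ripConst F (6 * m) + roConst F (4 * m) (6 * m) < 1 := by
  have hp0 : 0 < p := by omega
  have hp2 : 2 ≤ p := by omega
  have hrip : ∀ k, ripConst F k = sInf (RipSet F k) := fun k => rfl
  set δ₀ := sInf (RipSet F (7 * m)) with hδ₀def
  have hδ₀ : 0 ≤ δ₀ := le_csInf (ripset_nonempty F _)
    fun δ hδ => ripset_nonneg hp0 (by omega) hδ
  -- monotonicity: ripConst F (6m) ≤ δ₀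
  have hmono : ripConst F (6 * m) ≤ δ₀ := by
    rw [hrip]
    refine csInf_le_csInf (ripset_bddBelow hp0 (by omega)) (ripset_nonempty F _) ?_
    intro δ hδ c hc
    exact hδ c (sparse_mono (by omega) hc)
  -- orthogonality bound: roConst ≤ √2 δ₀
  have hro : roConst F (4 * m) (6 * m) ≤ Real.sqrt 2 * δ₀ := by
    have hmem : Real.sqrt 2 * δ₀ ∈ ThetaSet F (4 * m) (6 * m) :=
      fun c c' hc hc' hd => theta_mem F hm hp0 hc hc' hd
    exact csInf_le ⟨0, fun θ hθ => thetaset_nonneg hp2 (by omega) (by omega) hθ⟩ hmem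
  have h2 : δ₀ < Real.sqrt 2 - 1 := h
  have hs2 : Real.sqrt 2 ^ 2 = 2 := Real.sq_sqrt (by norm_num)
  have hs2n : 0 ≤ Real.sqrt 2 := Real.sqrt_nonneg 2
  nlinarith [mul_le_mul_of_nonneg_left h2.le hs2n]
end
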